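/- arXiv:math/0603469 — 7 statements merged into one kernel-verified Lean document; each statement's English description precedes it below -/
import Mathlib

section
/- Let c₀ = (3−√5)/2. If G = (V,E) is a finite directed graph with n vertices such that every vertex has outdegree at least c₀·n, then G contains a directed cycle of length at most 3. -/
lemma filter_subtype_card {V : Type*} (A : Finset V) (p : V → Prop) [DecidablePred p] :
    (Finset.univ.filter fun w : {x // x ∈ A} => p w.1).card = (A.filter p).card := by
  rw [Finset.univ_eq_attach, Finset.filter_attach]
  simp

/-- A directed cycle of length `ℓ` (a closed walk) in the digraph with edge relation `E`. -/
def IsCycle {V : Type*} (E : V → V → Prop) (ℓ : ℕ) : Prop :=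
  0 < ℓ ∧ ∃ v : ZMod ℓ → V, ∀ i, E (v i) (v (i + 1))

theorem CH_aux : ∀ (n : ℕ) (V : Type u) [Fintype V] [Nonempty V] (E : V → V → Prop)
    [DecidableRel E], Fintype.card V = n →
    (∀ v : V, (3 - Real.sqrt 5) / 2 * (Fintype.card V) ≤
      (Finset.univ.filter fun w => E v w).card) →
    ∃ ℓ : ℕ, ℓ ≤ 3 ∧ IsCycle E ℓ := by
  intro n
  induction n using Nat.strong_induction_on with
  | _ n IH =>
  intro V _ _ E _ hcard h
  by_contra hnc
  push_neg at hnc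
  classical
  set c : ℝ := (3 - Real.sqrt 5) / 2 with hc
  simp only [hcard] at h
  have hs5 : Real.sqrt 5 ^ 2 = 5 := Real.sq_sqrt (by norm_num)
  have hs5nn : (0:ℝ) ≤ Real.sqrt 5 := Real.sqrt_nonneg 5
  have hc0 : 0 < c := by rw [hc]; nlinarith
  have hc1 : c < 1 := by rw [hc]; nlinarith
  have hcid : 3 * c - c ^ 2 = 1 := by rw [hc]; nlinarith
  have noloop : ∀ x : V, ¬ E x x := fun x hx =>
    hnc 1 (by norm_num) ⟨one_pos, fun _ => x, fun _ => hx⟩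
  have nodigon : ∀ x y : V, E x y → E y x → False := by
    intro x y h1 h2
    refine hnc 2 (by norm_num) ⟨by norm_num, ![x, y], ?_⟩
    intro i; fin_cases i <;> simpa
  have notri : ∀ x y z : V, E x y → E y z → E z x → False := by
    intro x y z h1 h2 h3
    refine hnc 3 le_rfl ⟨by norm_num, ![x, y, z], ?_⟩
    intro i; fin_cases i <;> simpa
  have hn1 : 0 < n := hcard ▸ Fintype.card_pos
  have hnR : (0:ℝ) < n := by exact_mod_cast hn1
  -- there is a vertex of indegree at least c*n
  have hsum : ∑ v : V, (Finset.univ.filter fun w => E v w).card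
      = ∑ v : V, (Finset.univ.filter fun w => E w v).card := by
    simp only [Finset.card_filter]; rw [Finset.sum_comm]
  have hv : ∃ v : V, c * n ≤ ((Finset.univ.filter fun w => E w v).card : ℝ) := by
    by_contra hvn
    push_neg at hvn
    have h1 : (n : ℝ) * (c * n) ≤ ∑ v : V, ((Finset.univ.filter fun w => E v w).card : ℝ) := by
      calc (n:ℝ) * (c * n) = ∑ _v : V, (c * n) := by
            rw [Finset.sum_const, nsmul_eq_mul, Finset.card_univ, hcard]
        _ ≤ _ := Finset.sum_le_sum fun v _ => h v
    have h2 : ∑ v : V, ((Finset.univ.filter fun w => E w v).card : ℝ) < (n:ℝ) * (c * n) := by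
      calc ∑ v : V, ((Finset.univ.filter fun w => E w v).card : ℝ)
          < ∑ _v : V, (c * n) := Finset.sum_lt_sum_of_nonempty Finset.univ_nonempty
            fun v _ => hvn v
        _ = (n:ℝ) * (c * n) := by
            rw [Finset.sum_const, nsmul_eq_mul, Finset.card_univ, hcard]
    have h3 : ∑ v : V, ((Finset.univ.filter fun w => E v w).card : ℝ)
        = ∑ v : V, ((Finset.univ.filter fun w => E w v).card : ℝ) := by
      exact_mod_cast congrArg (Nat.cast : ℕ → ℝ) hsum
    linarith
  obtain ⟨v, hvI⟩ := hv
  set A := Finset.univ.filter fun w => E v w with hA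
  set I := Finset.univ.filter fun w => E w v with hI'
  have hAc : c * n ≤ (A.card : ℝ) := h v
  have hApos : 0 < A.card := by
    have : (0:ℝ) < A.card := lt_of_lt_of_le (by positivity) hAc
    exact_mod_cast this
  have hvA : v ∉ A := by
    intro hmem
    exact noloop v (Finset.mem_filter.mp hmem).2
  -- find u in A with few out-neighbours inside A
  have key : ∃ u ∈ A, ((A.filter fun w => E u w).card : ℝ) < c * A.card := by
    by_contra hcon
    push_neg at hcon
    have hAne : A.Nonempty := Finset.card_pos.mp hApos
    haveI : Nonempty {x // x ∈ A} := ⟨⟨hAne.choose, hAne.choose_spec⟩⟩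
    let E' : {x // x ∈ A} → {x // x ∈ A} → Prop := fun x y => E x.1 y.1
    haveI : DecidableRel E' := fun x y => inferInstanceAs (Decidable (E x.1 y.1))
    have hcard' : Fintype.card {x // x ∈ A} = A.card := Fintype.card_coe A
    have hlt : A.card < n := by
      rw [← hcard]
      refine Finset.card_lt_card ⟨Finset.subset_univ A, fun hsub => hvA ?_⟩
      exact hsub (Finset.mem_univ v)
    have hyp' : ∀ x : {x // x ∈ A}, (3 - Real.sqrt 5) / 2 * (Fintype.card {x // x ∈ A}) ≤
        ((Finset.univ.filter fun w : {x // x ∈ A} => E' x w).card : ℝ) := by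
      intro x
      have hcf : (Finset.univ.filter fun w : {x // x ∈ A} => E' x w).card
          = (A.filter fun w => E x.1 w).card := by
        apply Finset.card_bij (fun (w : {x // x ∈ A}) _ => w.1)
        · intro a ha
          exact Finset.mem_filter.mpr ⟨a.2, (Finset.mem_filter.mp ha).2⟩
        · intro a _ b _ hab
          exact Subtype.ext hab
        · intro b hb
          exact ⟨⟨b, (Finset.mem_filter.mp hb).1⟩,
            Finset.mem_filter.mpr ⟨Finset.mem_univ _, (Finset.mem_filter.mp hb).2⟩, rfl⟩
      rw [hcard', ← hc]
      calc c * (A.card:ℝ) ≤ ((A.filter fun w => E x.1 w).card : ℝ) := hcon x.1 x.2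
        _ = _ := by rw [hcf]
    obtain ⟨ℓ, hℓ, hpos, w, hw⟩ := IH A.card hlt {x // x ∈ A} E' hcard' hyp'
    exact hnc ℓ hℓ ⟨hpos, fun i => (w i).1, fun i => hw i⟩
  obtain ⟨u, huA, hut⟩ := key
  have hEvu : E v u := (Finset.mem_filter.mp huA).2
  set N := Finset.univ.filter fun w => E u w with hN
  have hNc : c * n ≤ (N.card : ℝ) := h u
  set B := N \ insert v A with hB
  have hint : (N ∩ insert v A) ⊆ A.filter fun w => E u w := by
    intro x hx
    obtain ⟨hxN, hxvA⟩ := Finset.mem_inter.mp hx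
    have hEux : E u x := (Finset.mem_filter.mp hxN).2
    rcases Finset.mem_insert.mp hxvA with rfl | hxA
    · exact absurd (nodigon x u hEvu hEux) id
    · exact Finset.mem_filter.mpr ⟨hxA, hEux⟩
  have hBcard : (N.card : ℝ) - ((A.filter fun w => E u w).card : ℝ) ≤ B.card := by
    have h1 : (N \ insert v A).card + (N ∩ insert v A).card = N.card :=
      Finset.card_sdiff_add_card_inter N (insert v A)
    have h2 : (N ∩ insert v A).card ≤ (A.filter fun w => E u w).card :=
      Finset.card_le_card hint
    have h1' : (B.card : ℝ) + ((N ∩ insert v A).card : ℝ) = N.card := by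
      rw [hB]; exact_mod_cast h1
    have h2' : ((N ∩ insert v A).card : ℝ) ≤ ((A.filter fun w => E u w).card : ℝ) := by
      exact_mod_cast h2
    linarith
  -- disjointness
  have hAI : Disjoint A I := Finset.disjoint_left.mpr fun x hxA hxI =>
    nodigon v x (Finset.mem_filter.mp hxA).2 (Finset.mem_filter.mp hxI).2
  have hAB : Disjoint A B := Finset.disjoint_left.mpr fun x hxA hxB =>
    (Finset.mem_sdiff.mp hxB).2 (Finset.mem_insert_of_mem hxA)
  have hIB : Disjoint I B := Finset.disjoint_left.mpr fun x hxI hxB =>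
    notri v u x hEvu (Finset.mem_filter.mp (Finset.mem_sdiff.mp hxB).1).2
      (Finset.mem_filter.mp hxI).2
  have hvI2 : v ∉ I := fun hvi => noloop v (Finset.mem_filter.mp hvi).2
  have hvB : v ∉ B := fun hvb => (Finset.mem_sdiff.mp hvb).2 (Finset.mem_insert_self v A)
  have htotal : 1 + A.card + I.card + B.card ≤ n := by
    have hd1 : Disjoint A (I ∪ B) := Finset.disjoint_union_right.mpr ⟨hAI, hAB⟩
    have e1 : (A ∪ (I ∪ B)).card = A.card + I.card + B.card := by
      rw [Finset.card_union_of_disjoint hd1, Finset.card_union_of_disjoint hIB, add_assoc]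
    have hvmem : v ∉ A ∪ (I ∪ B) := by
      intro hmem
      rcases Finset.mem_union.mp hmem with h' | h'
      · exact hvA h'
      · rcases Finset.mem_union.mp h' with h'' | h''
        · exact hvI2 h''
        · exact hvB h''
    calc 1 + A.card + I.card + B.card = (insert v (A ∪ (I ∪ B))).card := by
          rw [Finset.card_insert_of_notMem hvmem, e1]; ring
      _ ≤ Fintype.card V := Finset.card_le_univ _
      _ = n := hcard
  have htotR : 1 + (A.card:ℝ) + I.card + B.card ≤ n := by exact_mod_cast htotal
  have hprod : (1 - c) * (c * n) ≤ (1 - c) * A.card :=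
    mul_le_mul_of_nonneg_left hAc (by linarith)
  nlinarith [hvI, hAc, hut, hNc, hBcard, htotR, hprod, hnR, hcid]

/-- Caccetta–Häggkvist: if every vertex of a digraph on `n` vertices has outdegree at least
`((3 - √5)/2) · n`, then the digraph contains a directed cycle of length at most 3. -/
theorem stmt_5 {V : Type*} [Fintype V] [Nonempty V] (E : V → V → Prop) [DecidableRel E]
    (h : ∀ v : V, (3 - Real.sqrt 5) / 2 * (Fintype.card V) ≤
      (Finset.univ.filter fun w => E v w).card) :
    ∃ ℓ : ℕ, ℓ ≤ 3 ∧ IsCycle E ℓ :=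
  CH_aux (Fintype.card V) V E rfl h
end

section
/- Let Γ be a finite group and let A, B be subsets of Γ such that 1 ∈ A ∩ B, and such that whenever a ∈ A, b ∈ B and ab = 1, we have a = b = 1. Then |A·B| ≥ |A| + |B| − 1. -/
open scoped Pointwise

open Finset in
private lemma kemperman_aux {Γ : Type*} [Group Γ] [Fintype Γ] [DecidableEq Γ] :
    ∀ n : ℕ, ∀ A B : Finset Γ,
      (2 * Fintype.card Γ - A.card - B.card) * (Fintype.card Γ + 1) + B.card ≤ n →
      (1:Γ) ∈ A → (1:Γ) ∈ B →
      (∀ a ∈ A, ∀ b ∈ B, a * b = 1 → a = 1 ∧ b = 1) →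
      A.card + B.card - 1 ≤ (A * B).card := by
  intro n
  induction n with
  | zero =>
    intro A B hμ hA hB h
    have hb0 : B.card ≠ 0 := card_ne_zero_of_mem hB
    have := Nat.le_zero.mp hμ
    omega
  | succ n ih =>
    intro A B hμ hA hB h
    by_cases hbase : A ∩ B ⊆ {1}
    · -- base case : A ∩ B = {1}, and A ∪ B ⊆ A * B
      have hsub : A ∪ B ⊆ A * B := by
        intro x hx
        rcases mem_union.1 hx with hx | hx
        · simpa using mul_mem_mul hx hB
        · simpa using mul_mem_mul hA hx
      have hint : A ∩ B = {1} :=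
        Subset.antisymm hbase (singleton_subset_iff.2 (mem_inter.2 ⟨hA, hB⟩))
      have hcards := card_union_add_card_inter A B
      rw [hint, card_singleton] at hcards
      have h1 : (A ∪ B).card ≤ (A * B).card := card_le_card hsub
      omega
    · -- inductive case : pick g ∈ (A ∩ B) \ {1}
      obtain ⟨g, hgAB, hg1'⟩ := not_subset.1 hbase
      obtain ⟨hgA, hgB⟩ := mem_inter.1 hgAB
      have hg1 : g ≠ 1 := by simpa using hg1'
      have hginvB : g⁻¹ ∉ B := fun hb => hg1 ((h g hgA g⁻¹ hb (mul_inv_cancel g)).1)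
      have hginvA : g⁻¹ ∉ A := fun ha => hg1 ((h g⁻¹ ha g hgB (inv_mul_cancel g)).2)
      set N := Fintype.card Γ with hNdef
      -- the four translates
      set Ag : Finset Γ := A.image (· * g) with hAg
      set gB : Finset Γ := B.image (g * ·) with hgBdef
      set Agi : Finset Γ := A.image (· * g⁻¹) with hAgi
      set giB : Finset Γ := B.image (g⁻¹ * ·) with hgiB
      have cardAg : Ag.card = A.card := card_image_of_injective _ (mul_left_injective g)
      have cardgB : gB.card = B.card := card_image_of_injective _ (mul_right_injective g)
      -- the two key image identities
      have eq1 : (A ∩ Ag).image (· * g⁻¹) = A ∩ Agi := by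
        ext x
        simp only [hAg, hAgi, mem_image, mem_inter]
        constructor
        · rintro ⟨y, ⟨hyA, a, haA, rfl⟩, rfl⟩
          exact ⟨by simpa using haA, a * g, hyA, by group⟩
        · rintro ⟨hxA, a, haA, rfl⟩
          exact ⟨a, ⟨haA, a * g⁻¹, hxA, by group⟩, by group⟩
      have eq2 : (B ∩ giB).image (g * ·) = B ∩ gB := by
        ext x
        simp only [hgBdef, hgiB, mem_image, mem_inter]
        constructor
        · rintro ⟨y, ⟨hyB, b, hbB, rfl⟩, rfl⟩
          exact ⟨by simpa using hbB, g⁻¹ * b, hyB, by group⟩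
        · rintro ⟨hxB, b, hbB, rfl⟩
          exact ⟨g⁻¹ * (g * b), ⟨by simpa using hbB, g * b, hxB, by group⟩, by group⟩
      have cardeq1 : (A ∩ Ag).card = (A ∩ Agi).card := by
        rw [← eq1]; exact (card_image_of_injective _ (mul_left_injective g⁻¹)).symm
      have cardeq2 : (B ∩ giB).card = (B ∩ gB).card := by
        rw [← eq2]; exact (card_image_of_injective _ (mul_right_injective g)).symm
      have idA := card_union_add_card_inter A Ag
      have idB := card_union_add_card_inter B gB
      -- crude bounds
      have bA : (A ∪ Ag).card ≤ N := card_le_univ _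
      have bB : (B ∪ gB).card ≤ N := card_le_univ _
      have bA' : A.card ≤ N := card_le_univ _
      have bB' : B.card ≤ N := card_le_univ _
      by_cases hT : A.card + B.card ≤ (A ∪ Ag).card + (B ∩ giB).card
      · -- transform T : A' = A ∪ Ag, B' = B ∩ g⁻¹B
        have h1A : (1:Γ) ∈ A ∪ Ag := mem_union_left _ hA
        have h1B : (1:Γ) ∈ B ∩ giB :=
          mem_inter.2 ⟨hB, mem_image.2 ⟨g, hgB, inv_mul_cancel g⟩⟩
        have hmemB : ∀ b ∈ B ∩ giB, g * b ∈ B := by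
          intro b hb
          obtain ⟨b0, hb0, rfl⟩ := mem_image.1 (mem_inter.1 hb).2
          simpa using hb0
        have hU : ∀ a ∈ A ∪ Ag, ∀ b ∈ B ∩ giB, a * b = 1 → a = 1 ∧ b = 1 := by
          intro a ha b hb hab
          rcases mem_union.1 ha with haA | haAg
          · exact h a haA b (mem_inter.1 hb).1 hab
          · obtain ⟨a0, ha0, rfl⟩ := mem_image.1 haAg
            have hgb : g * b ∈ B := hmemB b hb
            have := h a0 ha0 (g * b) hgb (by rw [← mul_assoc]; exact hab)
            exfalso
            apply hginvB
            rw [inv_eq_of_mul_eq_one_right this.2]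
            exact (mem_inter.1 hb).1
        have hsub : (A ∪ Ag) * (B ∩ giB) ⊆ A * B := by
          intro x hx
          rw [Finset.mem_mul] at hx
          obtain ⟨a, ha, b, hb, rfl⟩ := hx
          rcases mem_union.1 ha with haA | haAg
          · exact mul_mem_mul haA (mem_inter.1 hb).1
          · obtain ⟨a0, ha0, rfl⟩ := mem_image.1 haAg
            rw [mul_assoc]
            exact mul_mem_mul ha0 (hmemB b hb)
        -- B strictly shrinks
        have hBstrict : (B ∩ giB).card < B.card := by
          rcases lt_or_eq_of_le (card_le_card (inter_subset_left : B ∩ giB ⊆ B)) with hlt | heq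
          · exact hlt
          · exfalso
            have hBeq : B ∩ giB = B :=
              eq_of_subset_of_card_le inter_subset_left (le_of_eq heq.symm)
            have hBsub : B ⊆ giB := by rw [← hBeq]; exact inter_subset_right
            have hgiBcard : giB.card = B.card :=
              card_image_of_injective _ (mul_right_injective g⁻¹)
            have : B = giB := eq_of_subset_of_card_le hBsub (le_of_eq hgiBcard)
            apply hginvB
            rw [this]
            exact mem_image.2 ⟨1, hB, by group⟩
        -- measure decreases
        have hμ' : (2 * N - (A ∪ Ag).card - (B ∩ giB).card) * (N + 1) + (B ∩ giB).card ≤ n := by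
          have hc1 : 2 * N - (A ∪ Ag).card - (B ∩ giB).card ≤ 2 * N - A.card - B.card := by
            omega
          have hmul := Nat.mul_le_mul_right (N + 1) hc1
          omega
        have := ih (A ∪ Ag) (B ∩ giB) hμ' h1A h1B hU
        have hfin := card_le_card hsub
        omega
      · -- transform S : A' = A ∩ Ag⁻¹, B' = B ∪ gB
        have h1A : (1:Γ) ∈ A ∩ Agi :=
          mem_inter.2 ⟨hA, mem_image.2 ⟨g, hgA, mul_inv_cancel g⟩⟩
        have h1B : (1:Γ) ∈ B ∪ gB := mem_union_left _ hB
        have hmemA : ∀ a ∈ A ∩ Agi, a * g ∈ A := by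
          intro a ha
          obtain ⟨a0, ha0, rfl⟩ := mem_image.1 (mem_inter.1 ha).2
          simpa using ha0
        have hU : ∀ a ∈ A ∩ Agi, ∀ b ∈ B ∪ gB, a * b = 1 → a = 1 ∧ b = 1 := by
          intro a ha b hb hab
          rcases mem_union.1 hb with hbB | hbgB
          · exact h a (mem_inter.1 ha).1 b hbB hab
          · obtain ⟨b0, hb0, rfl⟩ := mem_image.1 hbgB
            have hag : a * g ∈ A := hmemA a ha
            have := h (a * g) hag b0 hb0 (by rw [mul_assoc]; exact hab)
            exfalso
            apply hginvA
            rw [inv_eq_of_mul_eq_one_left this.1]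
            exact (mem_inter.1 ha).1
        have hsub : (A ∩ Agi) * (B ∪ gB) ⊆ A * B := by
          intro x hx
          rw [Finset.mem_mul] at hx
          obtain ⟨a, ha, b, hb, rfl⟩ := hx
          rcases mem_union.1 hb with hbB | hbgB
          · exact mul_mem_mul (mem_inter.1 ha).1 hbB
          · obtain ⟨b0, hb0, rfl⟩ := mem_image.1 hbgB
            rw [← mul_assoc]
            exact mul_mem_mul (hmemA a ha) hb0
        -- cardinality grows strictly
        have hgrow : A.card + B.card + 1 ≤ (A ∩ Agi).card + (B ∪ gB).card := by
          omega
        -- measure decreases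
        have hμ' : (2 * N - (A ∩ Agi).card - (B ∪ gB).card) * (N + 1) + (B ∪ gB).card ≤ n := by
          have bA2 : (A ∩ Agi).card ≤ N := card_le_univ _
          have hc1 : 2 * N - (A ∩ Agi).card - (B ∪ gB).card + 1 ≤
              2 * N - A.card - B.card := by omega
          have hmul := Nat.mul_le_mul_right (N + 1) hc1
          rw [add_mul, one_mul] at hmul
          omega
        have := ih (A ∩ Agi) (B ∪ gB) hμ' h1A h1B hU
        have hfin := card_le_card hsub
        omega

/-- Kemperman's theorem: if `1 ∈ A ∩ B` and the only solution of `ab = 1` with `a ∈ A`,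
`b ∈ B` is `a = b = 1`, then `|A·B| ≥ |A| + |B| - 1`. -/
theorem stmt_6 {Γ : Type*} [Group Γ] [Fintype Γ] [DecidableEq Γ]
    (A B : Finset Γ) (hA : (1 : Γ) ∈ A) (hB : (1 : Γ) ∈ B)
    (h : ∀ a ∈ A, ∀ b ∈ B, a * b = 1 → a = 1 ∧ b = 1) :
    A.card + B.card - 1 ≤ (A * B).card := by
  exact kemperman_aux
    ((2 * Fintype.card Γ - A.card - B.card) * (Fintype.card Γ + 1) + B.card)
    A B le_rfl hA hB h
end

section
/- Let Γ be a group and let B be a finite subset of Γ with 1 ∈ B. If the only solution of b₁b₂⋯b_k = 1 with all bᵢ ∈ B is b₁ = b₂ = ⋯ = b_k = 1, then |B^k| ≥ k|B| − k + 1. -/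
open scoped Pointwise

namespace Stmt7Aux

variable {Γ : Type*} [Group Γ] [DecidableEq Γ]

open Finset

lemma card_le_mul_left (A B : Finset Γ) {b : Γ} (hb : b ∈ B) : A.card ≤ (A * B).card := by
  have hsub : A.image (fun x => x * b) ⊆ A * B := by
    intro x hx
    obtain ⟨a, ha, rfl⟩ := Finset.mem_image.1 hx
    exact Finset.mul_mem_mul ha hb
  have := Finset.card_le_card hsub
  rwa [Finset.card_image_of_injective _ (mul_left_injective b)] at this

lemma card_le_mul_right (A B : Finset Γ) {a : Γ} (ha : a ∈ A) : B.card ≤ (A * B).card := by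
  have hsub : B.image (fun x => a * x) ⊆ A * B := by
    intro x hx
    obtain ⟨b, hbb, rfl⟩ := Finset.mem_image.1 hx
    exact Finset.mul_mem_mul ha hbb
  have := Finset.card_le_card hsub
  rwa [Finset.card_image_of_injective _ (mul_right_injective a)] at this

/-- Kemperman's unique-expression theorem, normalized form: if `1 ∈ A`, `1 ∈ B` and the only
representation of `1` as a product `a * b` with `a ∈ A`, `b ∈ B` is the trivial one, then
`|A * B| ≥ |A| + |B| - 1`. Proven by a double induction: on the "doubling deficiency"
`2|AB| - |A| - |B|` and on `|B|`. -/
theorem kem : ∀ (n₁ n₂ : ℕ) (A B : Finset Γ),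
    (1:Γ) ∈ A → (1:Γ) ∈ B →
    (∀ a ∈ A, ∀ b ∈ B, a * b = 1 → a = 1 ∧ b = 1) →
    2 * (A * B).card ≤ n₁ + A.card + B.card →
    B.card ≤ n₂ →
    A.card + B.card ≤ (A * B).card + 1 := by
  intro n₁
  induction n₁ using Nat.strong_induction_on with
  | _ n₁ ih₁ =>
  intro n₂
  induction n₂ using Nat.strong_induction_on with
  | _ n₂ ih₂ =>
  intro A B h1A h1B huniq hn₁ hn₂
  by_cases hpiv : ∃ g ∈ A ∩ B, g ≠ 1
  case neg =>
    -- A ∩ B = {1}; then A ∪ B ⊆ A * B and |A ∪ B| = |A| + |B| - 1.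
    push_neg at hpiv
    have hAB1 : A ∩ B = {1} := by
      apply Finset.Subset.antisymm
      · intro x hx
        simp only [Finset.mem_singleton]
        exact hpiv x hx
      · intro x hx
        simp only [Finset.mem_singleton] at hx
        subst hx
        exact Finset.mem_inter.2 ⟨h1A, h1B⟩
    have hsubA : A ⊆ A * B := by
      intro a ha
      have := Finset.mul_mem_mul ha h1B
      rwa [mul_one] at this
    have hsubB : B ⊆ A * B := by
      intro b hb
      have := Finset.mul_mem_mul h1A hb
      rwa [one_mul] at this
    have hU : (A ∪ B).card ≤ (A * B).card :=
      Finset.card_le_card (Finset.union_subset hsubA hsubB)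
    have hUI : (A ∪ B).card + (A ∩ B).card = A.card + B.card :=
      Finset.card_union_add_card_inter A B
    rw [hAB1, Finset.card_singleton] at hUI
    omega
  case pos =>
  obtain ⟨g, hgAB, hgne⟩ := hpiv
  have hgA : g ∈ A := (Finset.mem_inter.1 hgAB).1
  have hgB : g ∈ B := (Finset.mem_inter.1 hgAB).2
  have hginvA : g⁻¹ ∉ A := fun hc =>
    hgne ((huniq g⁻¹ hc g hgB (inv_mul_cancel g)).2)
  have hginvB : g⁻¹ ∉ B := fun hc =>
    hgne ((huniq g hgA g⁻¹ hc (mul_inv_cancel g)).1)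
  set Ag := A.image (fun x => x * g) with hAgdef
  set giB := B.image (fun x => g⁻¹ * x) with hgiBdef
  have cardAg : Ag.card = A.card := Finset.card_image_of_injective _ (mul_left_injective g)
  have cardgiB : giB.card = B.card := Finset.card_image_of_injective _ (mul_right_injective g⁻¹)
  set α := (Ag \ A).card with hαdef
  set β := (B \ giB).card with hβdef
  have hid1 : (Ag ∩ A).card + (Ag \ A).card = Ag.card := Finset.card_inter_add_card_sdiff _ _
  have hid2 : (B ∩ giB).card + (B \ giB).card = B.card := Finset.card_inter_add_card_sdiff _ _
  -- α ≥ 1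
  have hαpos : 1 ≤ α := by
    rcases Nat.eq_zero_or_pos α with h0 | h
    · exfalso
      have hempty : Ag \ A = ∅ := Finset.card_eq_zero.1 h0
      have hsub : Ag ⊆ A := by
        intro x hx
        by_contra hxA
        exact (Finset.notMem_empty x) (hempty ▸ Finset.mem_sdiff.2 ⟨hx, hxA⟩)
      have hEq : Ag = A := Finset.eq_of_subset_of_card_le hsub (by omega)
      have h1Ag : (1:Γ) ∈ Ag := hEq ▸ h1A
      obtain ⟨a, haA, hae⟩ := Finset.mem_image.1 h1Ag
      have ha' : a = g⁻¹ := eq_inv_of_mul_eq_one_left hae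
      exact hginvA (ha' ▸ haA)
    · exact h
  -- β ≥ 1
  have hβpos : 1 ≤ β := by
    rcases Nat.eq_zero_or_pos β with h0 | h
    · exfalso
      have hempty : B \ giB = ∅ := Finset.card_eq_zero.1 h0
      have hsub : B ⊆ giB := by
        intro x hx
        by_contra hxB
        exact (Finset.notMem_empty x) (hempty ▸ Finset.mem_sdiff.2 ⟨hx, hxB⟩)
      have hEq : B = giB := Finset.eq_of_subset_of_card_le hsub (by omega)
      have : g⁻¹ ∈ giB := Finset.mem_image.2 ⟨1, h1B, mul_one g⁻¹⟩
      exact hginvB (hEq ▸ this)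
    · exact h
  have hPA : A.card ≤ (A * B).card := card_le_mul_left A B h1B
  have hPB : B.card ≤ (A * B).card := card_le_mul_right A B h1A
  by_cases hcase : β ≤ α
  · -- Transform T1 : (A ∪ Ag, B ∩ g⁻¹B)
    set A' := A ∪ Ag with hA'def
    set B' := B ∩ giB with hB'def
    have h1A' : (1:Γ) ∈ A' := Finset.mem_union.2 (Or.inl h1A)
    have h1B' : (1:Γ) ∈ B' := by
      refine Finset.mem_inter.2 ⟨h1B, ?_⟩
      exact Finset.mem_image.2 ⟨g, hgB, inv_mul_cancel g⟩
    have huniq' : ∀ a ∈ A', ∀ b ∈ B', a * b = 1 → a = 1 ∧ b = 1 := by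
      intro a ha b hb hab
      have hbB : b ∈ B := (Finset.mem_inter.1 hb).1
      rcases Finset.mem_union.1 ha with haA | haAg
      · exact huniq a haA b hbB hab
      · obtain ⟨a₀, ha₀, rfl⟩ := Finset.mem_image.1 haAg
        obtain ⟨b₀, hb₀, rfl⟩ := Finset.mem_image.1 (Finset.mem_inter.1 hb).2
        have hab' : a₀ * b₀ = 1 := by
          have : a₀ * g * (g⁻¹ * b₀) = a₀ * b₀ := by
            simp [mul_assoc]
          rwa [this] at hab
        obtain ⟨ha1, hb1⟩ := huniq a₀ ha₀ b₀ hb₀ hab'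
        subst ha1; subst hb1
        exfalso
        rw [mul_one] at hbB
        exact hginvB hbB
    have hsub' : A' * B' ⊆ A * B := by
      rw [Finset.mul_subset_iff]
      intro x hx y hy
      have hyB : y ∈ B := (Finset.mem_inter.1 hy).1
      rcases Finset.mem_union.1 hx with hxA | hxAg
      · exact Finset.mul_mem_mul hxA hyB
      · obtain ⟨a₀, ha₀, rfl⟩ := Finset.mem_image.1 hxAg
        obtain ⟨b₀, hb₀, rfl⟩ := Finset.mem_image.1 (Finset.mem_inter.1 hy).2
        have : a₀ * g * (g⁻¹ * b₀) = a₀ * b₀ := by simp [mul_assoc]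
        rw [this]
        exact Finset.mul_mem_mul ha₀ hb₀
    have hP' : (A' * B').card ≤ (A * B).card := Finset.card_le_card hsub'
    have hcardA' : A'.card = A.card + α := by
      have h1 : A' = A ∪ (Ag \ A) := by
        rw [hA'def, Finset.union_sdiff_self_eq_union]
      rw [h1, Finset.card_union_of_disjoint Finset.disjoint_sdiff]
    have hcardB' : B'.card + β = B.card := hid2
    have hrec := ih₂ B'.card (by omega) A' B' h1A' h1B' huniq'
      (by omega) le_rfl
    omega
  · -- Transform T2 : (A ∩ Ag, B ∪ g⁻¹B), then translate to normalize.
    push_neg at hcase  -- α < β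
    set A'' := A ∩ Ag with hA''def
    set B'' := B ∪ giB with hB''def
    have hcardA'' : A''.card + α = A.card := by
      have : A''.card = (Ag ∩ A).card := by rw [hA''def, Finset.inter_comm]
      omega
    have hcardB'' : B''.card = B.card + β := by
      have h1 : B'' = giB ∪ (B \ giB) := by
        rw [hB''def, Finset.union_sdiff_self_eq_union, Finset.union_comm]
      rw [h1, Finset.card_union_of_disjoint Finset.disjoint_sdiff]
      omega
    have hgA'' : g ∈ A'' := by
      refine Finset.mem_inter.2 ⟨hgA, ?_⟩
      exact Finset.mem_image.2 ⟨1, h1A, one_mul g⟩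
    have hginvB'' : g⁻¹ ∈ B'' := by
      refine Finset.mem_union.2 (Or.inr ?_)
      exact Finset.mem_image.2 ⟨1, h1B, mul_one g⁻¹⟩
    have huniq'' : ∀ a ∈ A'', ∀ b ∈ B'', a * b = 1 → a = g ∧ b = g⁻¹ := by
      intro a ha b hb hab
      have haA : a ∈ A := (Finset.mem_inter.1 ha).1
      have haAg : a ∈ Ag := (Finset.mem_inter.1 ha).2
      rcases Finset.mem_union.1 hb with hbB | hbgiB
      · exfalso
        obtain ⟨ha1, hb1⟩ := huniq a haA b hbB hab
        subst ha1
        obtain ⟨a₀, ha₀, hae⟩ := Finset.mem_image.1 haAg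
        have : a₀ = g⁻¹ := eq_inv_of_mul_eq_one_left hae
        exact hginvA (this ▸ ha₀)
      · obtain ⟨a₀, ha₀, rfl⟩ := Finset.mem_image.1 haAg
        obtain ⟨b₀, hb₀, rfl⟩ := Finset.mem_image.1 hbgiB
        have hab' : a₀ * b₀ = 1 := by
          have : a₀ * g * (g⁻¹ * b₀) = a₀ * b₀ := by simp [mul_assoc]
          rwa [this] at hab
        obtain ⟨ha1, hb1⟩ := huniq a₀ ha₀ b₀ hb₀ hab'
        subst ha1; subst hb1
        constructor <;> simp
    have hsub'' : A'' * B'' ⊆ A * B := by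
      rw [Finset.mul_subset_iff]
      intro x hx y hy
      have hxA : x ∈ A := (Finset.mem_inter.1 hx).1
      rcases Finset.mem_union.1 hy with hyB | hygiB
      · exact Finset.mul_mem_mul hxA hyB
      · obtain ⟨a₀, ha₀, rfl⟩ := Finset.mem_image.1 (Finset.mem_inter.1 hx).2
        obtain ⟨b₀, hb₀, rfl⟩ := Finset.mem_image.1 hygiB
        have : a₀ * g * (g⁻¹ * b₀) = a₀ * b₀ := by simp [mul_assoc]
        rw [this]
        exact Finset.mul_mem_mul ha₀ hb₀
    have hP'' : (A'' * B'').card ≤ (A * B).card := Finset.card_le_card hsub''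
    -- Translate: A₂ = g⁻¹ A'', B₂ = B'' g, so that 1 ∈ A₂ ∩ B₂ with unique expression of 1.
    set A₂ := A''.image (fun x => g⁻¹ * x) with hA₂def
    set B₂ := B''.image (fun x => x * g) with hB₂def
    have cardA₂ : A₂.card = A''.card := Finset.card_image_of_injective _ (mul_right_injective g⁻¹)
    have cardB₂ : B₂.card = B''.card := Finset.card_image_of_injective _ (mul_left_injective g)
    have h1A₂ : (1:Γ) ∈ A₂ := Finset.mem_image.2 ⟨g, hgA'', inv_mul_cancel g⟩
    have h1B₂ : (1:Γ) ∈ B₂ := Finset.mem_image.2 ⟨g⁻¹, hginvB'', inv_mul_cancel g⟩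
    have huniq₂ : ∀ a ∈ A₂, ∀ b ∈ B₂, a * b = 1 → a = 1 ∧ b = 1 := by
      intro a ha b hb hab
      obtain ⟨a₀, ha₀, rfl⟩ := Finset.mem_image.1 ha
      obtain ⟨b₀, hb₀, rfl⟩ := Finset.mem_image.1 hb
      have hab' : a₀ * b₀ = 1 := by
        have h1 : g⁻¹ * a₀ * (b₀ * g) = g⁻¹ * (a₀ * b₀) * g := by
          simp [mul_assoc]
        rw [h1] at hab
        have h2 : a₀ * b₀ = g * 1 * g⁻¹ := by
          rw [← hab]
          simp [mul_assoc]
        simpa using h2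
      obtain ⟨ha1, hb1⟩ := huniq'' a₀ ha₀ b₀ hb₀ hab'
      subst ha1; subst hb1
      constructor <;> simp
    have hprod₂ : A₂ * B₂ = (A'' * B'').image (fun x => g⁻¹ * x * g) := by
      ext x
      constructor
      · intro hx
        obtain ⟨y, hy, z, hz, rfl⟩ := Finset.mem_mul.1 hx
        obtain ⟨a₀, ha₀, rfl⟩ := Finset.mem_image.1 hy
        obtain ⟨b₀, hb₀, rfl⟩ := Finset.mem_image.1 hz
        refine Finset.mem_image.2 ⟨a₀ * b₀, Finset.mul_mem_mul ha₀ hb₀, ?_⟩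
        simp [mul_assoc]
      · intro hx
        obtain ⟨y, hy, rfl⟩ := Finset.mem_image.1 hx
        obtain ⟨a₀, ha₀, b₀, hb₀, rfl⟩ := Finset.mem_mul.1 hy
        refine Finset.mem_mul.2 ⟨g⁻¹ * a₀, Finset.mem_image.2 ⟨a₀, ha₀, rfl⟩,
          b₀ * g, Finset.mem_image.2 ⟨b₀, hb₀, rfl⟩, ?_⟩
        simp [mul_assoc]
    have cardP₂ : (A₂ * B₂).card = (A'' * B'').card := by
      rw [hprod₂]
      apply Finset.card_image_of_injective
      intro u v huv
      simp only at huv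
      have h1 : g⁻¹ * u = g⁻¹ * v := mul_left_injective g huv
      exact mul_right_injective g⁻¹ h1
    have hPA'' : A''.card ≤ (A'' * B'').card := card_le_mul_left A'' B'' hginvB''
    have hPB'' : B''.card ≤ (A'' * B'').card := card_le_mul_right A'' B'' hgA''
    have hn₁pos : 1 ≤ n₁ := by omega
    have hrec := ih₁ (n₁ - 1) (by omega) B₂.card A₂ B₂ h1A₂ h1B₂ huniq₂
      (by omega) le_rfl
    omega

lemma one_mem_pow (B : Finset Γ) (hB : (1:Γ) ∈ B) (j : ℕ) : (1:Γ) ∈ B ^ j := by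
  induction j with
  | zero => simp [Finset.mem_one]
  | succ j ih =>
    rw [pow_succ]
    have := Finset.mul_mem_mul ih hB
    rwa [mul_one] at this

lemma exists_list_of_mem_pow (B : Finset Γ) (j : ℕ) :
    ∀ x ∈ B ^ j, ∃ l : List Γ, l.length = j ∧ (∀ y ∈ l, y ∈ B) ∧ l.prod = x := by
  induction j with
  | zero =>
    intro x hx
    rw [pow_zero, Finset.mem_one] at hx
    exact ⟨[], rfl, by simp, by simp [hx]⟩
  | succ j ih =>
    intro x hx
    rw [pow_succ] at hx
    obtain ⟨y, hy, b, hb, rfl⟩ := Finset.mem_mul.1 hx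
    obtain ⟨l, hl1, hl2, hl3⟩ := ih y hy
    refine ⟨l ++ [b], by simp [hl1], ?_, by simp [hl3]⟩
    intro z hz
    rcases List.mem_append.1 hz with h | h
    · exact hl2 z h
    · simp only [List.mem_singleton] at h
      subst h; exact hb

end Stmt7Aux

/-- If `1 ∈ B` and the only product of `k` elements of `B` equal to `1` is the trivial one,
then `|B^k| ≥ k|B| - k + 1`. -/
theorem stmt_7 {Γ : Type*} [Group Γ] [DecidableEq Γ] (B : Finset Γ) (k : ℕ)
    (hB : (1 : Γ) ∈ B)
    (h : ∀ l : List Γ, l.length = k → (∀ x ∈ l, x ∈ B) → l.prod = 1 → ∀ x ∈ l, x = 1) :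
    k * B.card - k + 1 ≤ (B ^ k).card := by
  have key : ∀ j, j ≤ k → j * B.card + 1 ≤ (B ^ j).card + j := by
    intro j
    induction j with
    | zero =>
      intro _
      simp
    | succ j ih =>
      intro hjk
      have hj : j ≤ k := by omega
      have IH := ih hj
      -- unique expression hypothesis for the pair (B^j, B)
      have huniq : ∀ a ∈ B ^ j, ∀ b ∈ B, a * b = 1 → a = 1 ∧ b = 1 := by
        intro a ha b hb hab
        obtain ⟨l, hl1, hl2, hl3⟩ := Stmt7Aux.exists_list_of_mem_pow B j a ha
        set L : List Γ := l ++ b :: List.replicate (k - (j+1)) 1 with hLdef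
        have hLlen : L.length = k := by
          simp [hLdef, hl1]
          omega
        have hLmem : ∀ x ∈ L, x ∈ B := by
          intro x hx
          rcases List.mem_append.1 hx with h1 | h1
          · exact hl2 x h1
          · rcases List.mem_cons.1 h1 with h2 | h2
            · subst h2; exact hb
            · have := List.eq_of_mem_replicate h2
              subst this; exact hB
        have hLprod : L.prod = 1 := by
          simp [hLdef, List.prod_append, List.prod_cons, List.prod_replicate, hl3, hab]
        have hall := h L hLlen hLmem hLprod
        constructor
        · rw [← hl3]
          apply List.prod_eq_one
          intro x hx
          exact hall x (List.mem_append.2 (Or.inl hx))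
        · exact hall b (List.mem_append.2 (Or.inr List.mem_cons_self))
      have h1Bj : (1:Γ) ∈ B ^ j := Stmt7Aux.one_mem_pow B hB j
      have hkem := Stmt7Aux.kem (2 * ((B ^ j) * B).card) B.card (B ^ j) B h1Bj hB huniq
        (by omega) le_rfl
      rw [pow_succ]
      have hsm : (j+1) * B.card = j * B.card + B.card := Nat.succ_mul j B.card
      omega
  have hk := key k le_rfl
  have hBpos : 1 ≤ B.card := Finset.card_pos.2 ⟨1, hB⟩
  have hBkpos : 1 ≤ (B ^ k).card := Finset.card_pos.2 ⟨1, Stmt7Aux.one_mem_pow B hB k⟩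
  omega
end

section
/- Let Γ be a finite group of order n and let A be a subset of Γ with |A| ≥ n/k for a positive integer k. Then the Cayley graph Cayley(Γ,A) contains a directed cycle of length at most k. -/
set_option linter.unusedSectionVars false

open Finset Pointwise

namespace Ham

variable {G : Type*} [Group G] [Fintype G] [DecidableEq G]

/-- closure (out-neighborhood including self) of `S` -/
def nb (A S : Finset G) : Finset G := S * insert 1 A

/-- boundary size -/
def bd (A S : Finset G) : ℕ := (nb A S \ S).card

/-- proper nonempty set -/
def prp (A S : Finset G) : Prop := S.Nonempty ∧ nb A S ≠ Finset.univ

noncomputable def kap (A : Finset G) : ℕ := sInf {m | ∃ S : Finset G, prp A S ∧ bd A S = m}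

noncomputable def atomMin (A : Finset G) : ℕ :=
  sInf {c | ∃ S : Finset G, prp A S ∧ bd A S = kap A ∧ S.card = c}

lemma nb_eq (A S : Finset G) : nb A S = S ∪ S * A := by
  rw [nb, insert_eq, mul_union]
  congr 1
  simp [mul_singleton]

lemma subset_nb (A S : Finset G) : S ⊆ nb A S := by
  rw [nb_eq]; exact subset_union_left

lemma nb_sdiff (A S : Finset G) : nb A S \ S = (S * A) \ S := by
  rw [nb_eq, union_sdiff_left]

lemma card_nb (A S : Finset G) : (nb A S).card = S.card + bd A S := by
  rw [bd, ← card_sdiff_add_card_eq_card (subset_nb A S), add_comm]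

lemma nb_mono (A : Finset G) {S T : Finset G} (h : S ⊆ T) : nb A S ⊆ nb A T :=
  mul_subset_mul_right h

lemma nb_union (A S T : Finset G) : nb A (S ∪ T) = nb A S ∪ nb A T := union_mul

lemma nb_inter_subset (A S T : Finset G) : nb A (S ∩ T) ⊆ nb A S ∩ nb A T :=
  subset_inter (nb_mono A inter_subset_left) (nb_mono A inter_subset_right)

lemma bd_submod (A S T : Finset G) :
    bd A (S ∪ T) + bd A (S ∩ T) ≤ bd A S + bd A T := by
  have h1 := card_union_add_card_inter (nb A S) (nb A T)
  have h2 := card_union_add_card_inter S T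
  have h3 : (nb A (S ∩ T)).card ≤ (nb A S ∩ nb A T).card :=
    card_le_card (nb_inter_subset A S T)
  have h4 : (nb A (S ∪ T)).card = (nb A S ∪ nb A T).card := by rw [nb_union]
  have e1 := card_nb A S
  have e2 := card_nb A T
  have e3 := card_nb A (S ∪ T)
  have e4 := card_nb A (S ∩ T)
  omega

lemma kap_le (A : Finset G) {S : Finset G} (h : prp A S) : kap A ≤ bd A S :=
  Nat.sInf_le ⟨S, h, rfl⟩

lemma exists_kap (A : Finset G) (hex : ∃ S : Finset G, prp A S) :
    ∃ S : Finset G, prp A S ∧ bd A S = kap A := by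
  obtain ⟨S, hS⟩ := hex
  have : {m | ∃ S : Finset G, prp A S ∧ bd A S = m}.Nonempty := ⟨bd A S, S, hS, rfl⟩
  obtain ⟨S', h', hb⟩ := Nat.sInf_mem this
  exact ⟨S', h', hb⟩

lemma exists_atom (A : Finset G) (hex : ∃ S : Finset G, prp A S) :
    ∃ S : Finset G, prp A S ∧ bd A S = kap A ∧ S.card = atomMin A := by
  obtain ⟨S, hS, hb⟩ := exists_kap A hex
  have : {c | ∃ S : Finset G, prp A S ∧ bd A S = kap A ∧ S.card = c}.Nonempty :=
    ⟨S.card, S, hS, hb, rfl⟩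
  obtain ⟨S', h1, h2, h3⟩ := Nat.sInf_mem this
  exact ⟨S', h1, h2, h3⟩

lemma atomMin_le (A : Finset G) {S : Finset G} (h1 : prp A S) (h2 : bd A S = kap A) :
    atomMin A ≤ S.card :=
  Nat.sInf_le ⟨S, h1, h2, rfl⟩

/-- duality: complement of closure is a reverse-proper set with no bigger boundary -/
lemma dualize (A : Finset G) {S : Finset G} (h : prp A S) :
    prp A⁻¹ (Finset.univ \ nb A S) ∧ bd A⁻¹ (Finset.univ \ nb A S) ≤ bd A S := by
  obtain ⟨hne, hpr⟩ := h
  set T := Finset.univ \ nb A S with hT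
  have hTne : T.Nonempty := by
    rw [hT, sdiff_nonempty]
    intro hc
    exact hpr (univ_subset_iff.mp hc)
  have hTS : ∀ x ∈ T, x ∉ nb A S := by
    intro x hx
    rw [hT, mem_sdiff] at hx
    exact hx.2
  -- key: T * A⁻¹ avoids S, and T*A⁻¹ \ T ⊆ S*A \ S
  have key : ∀ x ∈ T * A⁻¹, x ∉ T → x ∈ (S * A) \ S := by
    intro x hx hxT
    rw [mem_mul] at hx
    obtain ⟨t, ht, z, hz, hzx⟩ := hx
    rw [mem_inv] at hz
    obtain ⟨a, ha, hainv⟩ := hz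
    -- x = t * a⁻¹, so t = x * a
    have hta : t = x * a := by
      rw [← hzx, ← hainv]; group
    have hxS : x ∉ S := by
      intro hxS
      exact hTS t ht (by
        rw [nb_eq, hta]
        exact mem_union_right _ (mul_mem_mul hxS ha))
    -- x ∈ nb A S since x ∉ T
    have hxnb : x ∈ nb A S := by
      by_contra hc
      exact hxT (by rw [hT, mem_sdiff]; exact ⟨mem_univ _, hc⟩)
    rw [nb_eq, mem_union] at hxnb
    rcases hxnb with h' | h'
    · exact absurd h' hxS
    · exact mem_sdiff.2 ⟨h', hxS⟩
  have hbsub : nb A⁻¹ T \ T ⊆ (S * A) \ S := by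
    intro x hx
    rw [nb_sdiff, mem_sdiff] at hx
    exact key x hx.1 hx.2
  constructor
  · refine ⟨hTne, ?_⟩
    intro hc
    obtain ⟨s, hs⟩ := hne
    have : s ∈ nb A⁻¹ T := hc ▸ mem_univ s
    rw [nb_eq, mem_union] at this
    rcases this with h' | h'
    · exact hTS s h' (subset_nb A S hs)
    · rw [mem_mul] at h'
      obtain ⟨t, ht, z, hz, hzx⟩ := h'
      rw [mem_inv] at hz
      obtain ⟨a, ha, hainv⟩ := hz
      have hta : t = s * a := by rw [← hzx, ← hainv]; group
      exact hTS t ht (by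
        rw [nb_eq, hta]
        exact mem_union_right _ (mul_mem_mul hs ha))
  · calc bd A⁻¹ T = (nb A⁻¹ T \ T).card := rfl
      _ ≤ ((S * A) \ S).card := card_le_card hbsub
      _ = bd A S := by rw [bd, nb_sdiff]

lemma kap_inv_le (A : Finset G) (hex : ∃ S : Finset G, prp A S) : kap A⁻¹ ≤ kap A := by
  obtain ⟨S, hS, hb⟩ := exists_kap A hex
  obtain ⟨h1, h2⟩ := dualize A hS
  calc kap A⁻¹ ≤ bd A⁻¹ _ := kap_le A⁻¹ h1
    _ ≤ bd A S := h2
    _ = kap A := hb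

lemma kap_inv (A : Finset G) (hex : ∃ S : Finset G, prp A S) : kap A⁻¹ = kap A := by
  have hex' : ∃ S : Finset G, prp A⁻¹ S := by
    obtain ⟨S, hS⟩ := hex
    exact ⟨_, (dualize A hS).1⟩
  refine le_antisymm (kap_inv_le A hex) ?_
  have := kap_inv_le A⁻¹ hex'
  rwa [inv_inv] at this


/-! ### translation invariance -/

lemma nb_smul (A : Finset G) (g : G) (S : Finset G) : nb A (g • S) = g • nb A S := by
  rw [nb, nb, smul_mul_assoc]

lemma bd_smul (A : Finset G) (g : G) (S : Finset G) : bd A (g • S) = bd A S := by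
  rw [bd, bd, nb_smul, ← smul_finset_sdiff, card_smul_finset]

lemma prp_smul (A : Finset G) (g : G) {S : Finset G} (h : prp A S) : prp A (g • S) := by
  refine ⟨h.1.smul_finset, ?_⟩
  rw [nb_smul]
  intro hc
  apply h.2
  have := card_smul_finset g (nb A S)
  rw [hc] at this
  exact (card_eq_iff_eq_univ _).mp this.symm

/-! ### finite subgroup-finset facts -/

/-- if `HF * X = X` then `HF.card ∣ X.card`, for `HF` a subgroup-like finset -/
lemma coset_dvd (HF : Finset G) (h1 : (1:G) ∈ HF)
    (hmul : ∀ a ∈ HF, ∀ b ∈ HF, a * b ∈ HF) (hinv : ∀ a ∈ HF, a⁻¹ ∈ HF) :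
    ∀ X : Finset G, HF * X = X → HF.card ∣ X.card := by
  intro X
  induction X using Finset.strongInduction with
  | _ X ih =>
    intro hX
    rcases X.eq_empty_or_nonempty with rfl | ⟨x, hx⟩
    · simp
    · have hcoset : HF.image (· * x) ⊆ X := by
        intro y hy
        rw [mem_image] at hy
        obtain ⟨a, ha, rfl⟩ := hy
        rw [← hX]
        exact mul_mem_mul ha hx
      have hcard : (HF.image (· * x)).card = HF.card :=
        card_image_of_injective _ (mul_left_injective x)
      set X' := X \ HF.image (· * x) with hX'
      have hssub : X' ⊂ X := by
        refine sdiff_ssubset ?_ ?_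
        · exact hcoset
        · exact ⟨x, mem_image.2 ⟨1, h1, one_mul x⟩⟩
      have hX'eq : HF * X' = X' := by
        apply Finset.Subset.antisymm
        · intro y hy
          rw [mem_mul] at hy
          obtain ⟨a, ha, b, hb, rfl⟩ := hy
          rw [hX', mem_sdiff] at hb ⊢
          constructor
          · rw [← hX]; exact mul_mem_mul ha hb.1
          · intro hc
            apply hb.2
            rw [mem_image] at hc
            obtain ⟨c, hc', hcc⟩ := hc
            rw [mem_image]
            refine ⟨a⁻¹ * c, hmul _ (hinv a ha) _ hc', ?_⟩
            have : a * b = c * x := hcc.symm ▸ rfl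
            rw [mul_assoc, ← this, ← mul_assoc, inv_mul_cancel, one_mul]
        · intro y hy
          have : (1:G) * y ∈ HF * X' := mul_mem_mul h1 hy
          rwa [one_mul] at this
      have hdvd := ih X' hssub hX'eq
      have hcards : X.card = HF.card + X'.card := by
        rw [hX', ← card_sdiff_add_card_eq_card hcoset, ← hcard, add_comm]
      rw [hcards]
      exact Nat.dvd_add dvd_rfl hdvd

/-! ### balls -/

lemma ball_mono (A : Finset G) : ∀ {i j : ℕ}, i ≤ j →
    (insert 1 A : Finset G)^i ⊆ (insert 1 A)^j := by
  intro i j h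
  induction j with
  | zero => simpa [Nat.le_zero.mp h]
  | succ j ihj =>
    rcases Nat.lt_or_ge i (j+1) with h' | h'
    · have := ihj (by omega)
      refine this.trans ?_
      intro x hx
      rw [pow_succ]
      have : x * 1 ∈ (insert 1 A : Finset G)^j * insert 1 A :=
        mul_mem_mul hx (mem_insert_self 1 A)
      rwa [mul_one] at this
    · have : i = j + 1 := by omega
      subst this; rfl

lemma one_mem_ball (A : Finset G) (i : ℕ) : (1:G) ∈ (insert 1 A : Finset G)^i := by
  have := ball_mono A (Nat.zero_le i) (by simp : (1:G) ∈ (insert 1 A : Finset G)^0)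
  exact this

lemma mem_ball_decomp (A : Finset G) : ∀ (m : ℕ) (x : G), x ∈ (insert 1 A : Finset G)^m →
    x = 1 ∨ ∃ j, 1 ≤ j ∧ j ≤ m ∧ x ∈ A^j := by
  intro m
  induction m with
  | zero => intro x hx; left; simpa using hx
  | succ m ihm =>
    intro x hx
    rw [pow_succ, mem_mul] at hx
    obtain ⟨y, hy, b, hb, rfl⟩ := hx
    rw [mem_insert] at hb
    rcases hb with rfl | hb
    · rw [mul_one]
      rcases ihm y hy with h | ⟨j, h1, h2, h3⟩
      · exact Or.inl h
      · exact Or.inr ⟨j, h1, by omega, h3⟩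
    · rcases ihm y hy with rfl | ⟨j, h1, h2, h3⟩
      · right; exact ⟨1, le_refl 1, by omega, by rwa [one_mul, pow_one]⟩
      · right
        exact ⟨j+1, by omega, by omega, by rw [pow_succ]; exact mul_mem_mul h3 hb⟩

lemma mem_pow_of_le (A : Finset G) {j m : ℕ} (h1 : 1 ≤ j) (h2 : j ≤ m) {x : G}
    (hx : x ∈ A^j) : x ∈ (insert 1 A : Finset G)^m := by
  apply ball_mono A h2
  have : A^j ⊆ (insert 1 A : Finset G)^j := by
    apply pow_subset_pow_left
    exact subset_insert 1 A
  exact this hx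

lemma inv_mem_of_mem_inv_pow (A : Finset G) {j : ℕ} {x : G} (hx : x ∈ (A⁻¹ : Finset G)^j) :
    x⁻¹ ∈ A^j := by
  rw [inv_pow, mem_inv'] at hx
  exact hx


/-! ### growth of balls -/

lemma chain (A : Finset G) : ∀ p : ℕ, (insert 1 A : Finset G)^p ≠ Finset.univ →
    1 + p * kap A ≤ ((insert 1 A : Finset G)^p).card := by
  intro p
  induction p with
  | zero => intro _; simp
  | succ p ihp =>
    intro hp
    have hple : (insert 1 A : Finset G)^p ≠ Finset.univ := by
      intro hc
      exact hp (univ_subset_iff.mp (hc ▸ ball_mono A (Nat.le_succ p)))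
    have hrec := ihp hple
    have heq : (insert 1 A : Finset G)^(p+1) = nb A ((insert 1 A : Finset G)^p) := by
      rw [pow_succ]; rfl
    have hprp : prp A ((insert 1 A : Finset G)^p) :=
      ⟨⟨1, one_mem_ball A p⟩, by rw [← heq]; exact hp⟩
    have hbd := kap_le A hprp
    have hcard := card_nb A ((insert 1 A : Finset G)^p)
    rw [heq]
    have : (p+1) * kap A = p * kap A + kap A := by ring
    omega

/-! ### the core argument -/

lemma core (A : Finset G) (k : ℕ) (hk : 2 ≤ k)
    (hg : ∀ ℓ, 1 ≤ ℓ → ℓ ≤ k → (1:G) ∉ A^ℓ)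
    (hA : A.Nonempty)
    (hgen : ∀ x : G, ∃ m, x ∈ (insert 1 A : Finset G)^m)
    (hgen' : ∀ x : G, ∃ m, x ∈ (insert 1 A⁻¹ : Finset G)^m)
    (hsym : atomMin A ≤ atomMin A⁻¹)
    (ihH : ∀ HF : Finset G, (1:G) ∈ HF → (∀ a ∈ HF, ∀ b ∈ HF, a * b ∈ HF) →
        (∀ a ∈ HF, a⁻¹ ∈ HF) → HF ≠ Finset.univ → k * (A ∩ HF).card < HF.card) :
    k * A.card < Fintype.card G := by
  set n := Fintype.card G with hn
  obtain ⟨a, ha⟩ := hA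
  have h1A : (1:G) ∉ A := by
    have := hg 1 le_rfl (by omega)
    rwa [pow_one] at this
  have ha1 : a ≠ 1 := fun hc => h1A (hc ▸ ha)
  have hn2 : 2 ≤ n := by
    rw [hn, ← card_univ]
    rw [show (2:ℕ) = 1 + 1 by rfl, Nat.add_one_le_iff]
    exact one_lt_card.mpr ⟨a, mem_univ a, 1, mem_univ 1, ha1⟩
  -- B and B' are not everything
  have hB : (insert 1 A : Finset G) ≠ Finset.univ := by
    intro hc
    have hainv : a⁻¹ ∈ insert 1 A := hc ▸ mem_univ a⁻¹
    rw [mem_insert] at hainv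
    rcases hainv with h' | h'
    · exact ha1 (by rw [← inv_inv a, h', inv_one])
    · refine hg 2 (by omega) hk ?_
      rw [pow_two]
      have := mul_mem_mul ha h'
      rwa [mul_inv_cancel] at this
  have hB' : (insert 1 A⁻¹ : Finset G) ≠ Finset.univ := by
    intro hc
    have hamem : a ∈ insert 1 A⁻¹ := hc ▸ mem_univ a
    rw [mem_insert] at hamem
    rcases hamem with h' | h'
    · exact ha1 h'
    · rw [mem_inv] at h'
      obtain ⟨b, hb, hba⟩ := h'
      refine hg 2 (by omega) hk ?_
      rw [pow_two]
      have := mul_mem_mul hb ha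
      rwa [← hba, mul_inv_cancel] at this
  have nb_one : ∀ C : Finset G, nb C ({1} : Finset G) = insert 1 C := by
    intro C
    rw [nb, singleton_mul, one_smul]
  have prp1 : prp A ({1} : Finset G) := ⟨⟨1, mem_singleton_self 1⟩, by rw [nb_one]; exact hB⟩
  have prp1' : prp A⁻¹ ({1} : Finset G) := ⟨⟨1, mem_singleton_self 1⟩, by rw [nb_one]; exact hB'⟩
  have hexA : ∃ S : Finset G, prp A S := ⟨_, prp1⟩
  have hexA' : ∃ S : Finset G, prp A⁻¹ S := ⟨_, prp1'⟩
  have hkapinv : kap A⁻¹ = kap A := kap_inv A hexA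
  -- maximal non-full balls
  have hexm : ∃ m, (insert 1 A : Finset G)^m = Finset.univ := by
    choose f hf using hgen
    exact ⟨Finset.univ.sup f, eq_univ_of_forall fun x =>
      ball_mono A (Finset.le_sup (mem_univ x)) (hf x)⟩
  have hexm' : ∃ m, (insert 1 A⁻¹ : Finset G)^m = Finset.univ := by
    choose f hf using hgen'
    exact ⟨Finset.univ.sup f, eq_univ_of_forall fun x =>
      ball_mono A⁻¹ (Finset.le_sup (mem_univ x)) (hf x)⟩
  set m₀ := Nat.find hexm with hm₀
  set m₁ := Nat.find hexm' with hm₁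
  have hm₀2 : 2 ≤ m₀ := by
    rw [hm₀]
    rw [Nat.le_find_iff]
    intro i hi
    interval_cases i
    · intro hc
      rw [pow_zero] at hc
      have : (1:Finset G).card = n := by rw [hc]; exact card_univ
      rw [card_one] at this
      omega
    · intro hc
      rw [pow_one] at hc
      exact hB hc
  have hm₁2 : 2 ≤ m₁ := by
    rw [hm₁, Nat.le_find_iff]
    intro i hi
    interval_cases i
    · intro hc
      rw [pow_zero] at hc
      have : (1:Finset G).card = n := by rw [hc]; exact card_univ
      rw [card_one] at this
      omega
    · intro hc
      rw [pow_one] at hc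
      exact hB' hc
  set ph := m₀ - 1 with hph
  set qh := m₁ - 1 with hqh
  have hphne : (insert 1 A : Finset G)^ph ≠ Finset.univ := Nat.find_min hexm (by omega)
  have hqhne : (insert 1 A⁻¹ : Finset G)^qh ≠ Finset.univ := Nat.find_min hexm' (by omega)
  have hphfull : (insert 1 A : Finset G)^(ph+1) = Finset.univ := by
    have : ph + 1 = m₀ := by omega
    rw [this]; exact Nat.find_spec hexm
  have hqhfull : (insert 1 A⁻¹ : Finset G)^(qh+1) = Finset.univ := by
    have : qh + 1 = m₁ := by omega
    rw [this]; exact Nat.find_spec hexm'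
  have hph1 : 1 ≤ ph := by omega
  have hqh1 : 1 ≤ qh := by omega
  -- decompose memberships into products
  have fwd_decomp : ∀ (m : ℕ) (x : G), x ≠ 1 → x ∈ (insert 1 A : Finset G)^m →
      ∃ i, 1 ≤ i ∧ i ≤ m ∧ x ∈ A^i := by
    intro m x hx1 hx
    rcases mem_ball_decomp A m x hx with h | h
    · exact absurd h hx1
    · exact h
  have rev_decomp : ∀ (m : ℕ) (x : G), x ≠ 1 → x ∈ (insert 1 A⁻¹ : Finset G)^m →
      ∃ j, 1 ≤ j ∧ j ≤ m ∧ x⁻¹ ∈ A^j := by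
    intro m x hx1 hx
    rcases mem_ball_decomp A⁻¹ m x hx with h | ⟨j, h1, h2, h3⟩
    · exact absurd h hx1
    · exact ⟨j, h1, h2, inv_mem_of_mem_inv_pow A h3⟩
  have combine : ∀ (x : G), x ≠ 1 → ∀ i j, 1 ≤ i → 1 ≤ j → i + j ≤ k →
      x ∈ A^i → x⁻¹ ∈ A^j → False := by
    intro x hx1 i j hi hj hij hxi hxj
    refine hg (i+j) (by omega) hij ?_
    rw [pow_add]
    have := mul_mem_mul hxi hxj
    rwa [mul_inv_cancel] at this
  -- claim 1 : k ≤ ph + qh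
  have claim1 : k ≤ ph + qh := by
    by_contra hlt
    push_neg at hlt
    have hamem : a ∈ (insert 1 A : Finset G)^ph :=
      mem_pow_of_le A le_rfl hph1 (by rwa [pow_one])
    obtain ⟨i, hi1, hi2, hi3⟩ := fwd_decomp ph a ha1 hamem
    have hamem' : a ∈ (insert 1 A⁻¹ : Finset G)^(qh+1) := hqhfull ▸ mem_univ a
    obtain ⟨j, hj1, hj2, hj3⟩ := rev_decomp (qh+1) a ha1 hamem'
    exact combine a ha1 i j hi1 hj1 (by omega) hi3 hj3
  -- choose p, q with p + q = k
  obtain ⟨p, q, hpq, hpph, hqqh⟩ : ∃ p q, p + q = k ∧ p ≤ ph ∧ q ≤ qh := by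
    rcases le_or_gt k ph with h' | h'
    · exact ⟨k, 0, by omega, h', by omega⟩
    · exact ⟨ph, k - ph, by omega, le_rfl, by omega⟩
  have hpne : (insert 1 A : Finset G)^p ≠ Finset.univ := by
    intro hc
    exact hphne (univ_subset_iff.mp (hc ▸ ball_mono A hpph))
  have hqne : (insert 1 A⁻¹ : Finset G)^q ≠ Finset.univ := by
    intro hc
    exact hqhne (univ_subset_iff.mp (hc ▸ ball_mono A⁻¹ hqqh))
  -- intersection of balls is {1}
  have hinter : (insert 1 A : Finset G)^p ∩ (insert 1 A⁻¹ : Finset G)^q = {1} := by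
    apply Finset.Subset.antisymm
    · intro x hx
      rw [mem_inter] at hx
      rw [mem_singleton]
      by_contra hx1
      obtain ⟨i, hi1, hi2, hi3⟩ := fwd_decomp p x hx1 hx.1
      obtain ⟨j, hj1, hj2, hj3⟩ := rev_decomp q x hx1 hx.2
      exact combine x hx1 i j hi1 hj1 (by omega) hi3 hj3
    · intro x hx
      rw [mem_singleton] at hx
      subst hx
      exact mem_inter.mpr ⟨one_mem_ball A p, one_mem_ball A⁻¹ q⟩
  -- the basic count : n ≥ 1 + k * kap A
  have hcount : 1 + k * kap A ≤ n := by
    have h1 := chain A p hpne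
    have h2 := chain A⁻¹ q hqne
    rw [hkapinv] at h2
    have h3 := card_union_add_card_inter ((insert 1 A : Finset G)^p)
      ((insert 1 A⁻¹ : Finset G)^q)
    rw [hinter, card_singleton] at h3
    have h4 : ((insert 1 A : Finset G)^p ∪ (insert 1 A⁻¹ : Finset G)^q).card ≤ n := by
      rw [hn, ← card_univ]; exact card_le_card (subset_univ _)
    have h5 : k * kap A = p * kap A + q * kap A := by rw [← hpq, add_mul]
    omega
  -- the atom containing 1
  obtain ⟨S₀, hS₀p, hS₀b, hS₀c⟩ := exists_atom A hexA
  obtain ⟨g, hg0⟩ := hS₀p.1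
  set HF := g⁻¹ • S₀ with hHFdef
  have hHFp : prp A HF := prp_smul A g⁻¹ hS₀p
  have hHFb : bd A HF = kap A := by rw [hHFdef, bd_smul]; exact hS₀b
  have hHFc : HF.card = atomMin A := by rw [hHFdef, card_smul_finset]; exact hS₀c
  have h1HF : (1:G) ∈ HF := by
    have := smul_mem_smul_finset (a := g⁻¹) hg0
    rwa [smul_eq_mul, inv_mul_cancel] at this
  have hHFne : HF ≠ Finset.univ := by
    intro hc
    exact hHFp.2 (univ_subset_iff.mp (hc ▸ subset_nb A HF))
  -- stability: HF is closed under left translation by its elements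
  have hstab : ∀ η ∈ HF, η • HF = HF := by
    intro η hη
    by_contra hne
    set F := η • HF with hFdef
    have hFp : prp A F := prp_smul A η hHFp
    have hFb : bd A F = kap A := by rw [hFdef, bd_smul]; exact hHFb
    have hFc : F.card = HF.card := by rw [hFdef, card_smul_finset]
    have hηF : η ∈ F := by
      have := smul_mem_smul_finset (a := η) h1HF
      rwa [smul_eq_mul, mul_one] at this
    set I := HF ∩ F with hIdef
    have hIne : I.Nonempty := ⟨η, mem_inter.mpr ⟨hη, hηF⟩⟩
    have hInotall : I ≠ HF := by
      intro hc
      apply hne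
      have hsub : HF ⊆ F := by rw [← hc]; exact inter_subset_right
      exact (eq_of_subset_of_card_le hsub (le_of_eq hFc)).symm
    have hIcard : I.card < HF.card :=
      card_lt_card (ssubset_of_ne_of_subset hInotall inter_subset_left)
    have hIprp : prp A I := by
      refine ⟨hIne, ?_⟩
      intro hc
      exact hHFp.2 (univ_subset_iff.mp (hc ▸ nb_mono A inter_subset_left))
    have hIbd : kap A ≤ bd A I := kap_le A hIprp
    by_cases hU : nb A (HF ∪ F) = Finset.univ
    · -- closure of union is everything: complement of nb F is a small reverse fragment
      set T := Finset.univ \ nb A F with hTdef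
      obtain ⟨hTp, hTble⟩ := dualize A hFp
      have hTb : bd A⁻¹ T = kap A⁻¹ := by
        refine le_antisymm ?_ (kap_le A⁻¹ hTp)
        rw [hkapinv]
        exact hTble.trans (le_of_eq hFb)
      have hTatom : atomMin A⁻¹ ≤ T.card := atomMin_le A⁻¹ hTp hTb
      have hTcard : T.card + (nb A F).card = n := by
        rw [hTdef, card_sdiff_add_card_eq_card (subset_univ _), card_univ]
      have hnbF : (nb A F).card = HF.card + kap A := by
        rw [card_nb, hFb, hFc]
      have hnbHF : (nb A HF).card = HF.card + kap A := by rw [card_nb, hHFb]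
      have hkey : n + (I.card + kap A) ≤ (HF.card + kap A) + (HF.card + kap A) := by
        have h3 := card_union_add_card_inter (nb A HF) (nb A F)
        have h4 : (nb A HF ∪ nb A F) = Finset.univ := by rw [← nb_union]; exact hU
        have h5 : nb A I ⊆ nb A HF ∩ nb A F := nb_inter_subset A HF F
        have h6 : (nb A I).card ≤ (nb A HF ∩ nb A F).card := card_le_card h5
        have h7 := card_nb A I
        rw [h4, card_univ] at h3
        omega
      have hIpos : 1 ≤ I.card := card_pos.mpr hIne
      omega
    · -- standard submodularity contradiction
      have hUprp : prp A (HF ∪ F) :=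
        ⟨⟨η, mem_union_left F hη⟩, hU⟩
      have hUbd : kap A ≤ bd A (HF ∪ F) := kap_le A hUprp
      have hsubm := bd_submod A HF F
      rw [hHFb, hFb, ← hIdef] at hsubm
      have hIbd' : bd A I = kap A := by omega
      have : atomMin A ≤ I.card := atomMin_le A hIprp hIbd'
      omega
  -- HF is a subgroup finset
  have hHFmul : ∀ x ∈ HF, ∀ y ∈ HF, x * y ∈ HF := by
    intro x hx y hy
    have := smul_mem_smul_finset (a := x) hy
    rwa [smul_eq_mul, hstab x hx] at this
  have hHFpow : ∀ j : ℕ, ∀ x ∈ HF, x^(j+1) ∈ HF := by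
    intro j
    induction j with
    | zero => intro x hx; rwa [pow_one]
    | succ j ihj =>
      intro x hx
      rw [pow_succ]
      exact hHFmul _ (ihj x hx) _ hx
  have hHFinv : ∀ x ∈ HF, x⁻¹ ∈ HF := by
    intro x hx
    have hxn : x^n = 1 := by rw [hn]; exact pow_card_eq_one
    have : x⁻¹ = x^(n-1) := by
      refine inv_eq_of_mul_eq_one_right ?_
      rw [← pow_succ']
      have : n - 1 + 1 = n := by omega
      rw [this, hxn]
    rw [this]
    have : n - 1 = (n-2) + 1 := by omega
    rw [this]
    exact hHFpow _ x hx
  -- h divides kappa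
  have hdvdkap : HF.card ∣ kap A := by
    set X := (HF * A) \ HF with hXdef
    have hHX : HF * X = X := by
      apply Finset.Subset.antisymm
      · intro y hy
        rw [mem_mul] at hy
        obtain ⟨h₁, hh₁, x, hx, rfl⟩ := hy
        rw [hXdef, mem_sdiff] at hx ⊢
        obtain ⟨hx1, hx2⟩ := hx
        constructor
        · rw [mem_mul] at hx1
          obtain ⟨h₂, hh₂, a', ha', rfl⟩ := hx1
          rw [← mul_assoc]
          exact mul_mem_mul (hHFmul _ hh₁ _ hh₂) ha'
        · intro hc
          apply hx2
          have := hHFmul _ (hHFinv _ hh₁) _ hc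
          rwa [← mul_assoc, inv_mul_cancel, one_mul] at this
      · intro y hy
        have : (1:G) * y ∈ HF * X := mul_mem_mul h1HF hy
        rwa [one_mul] at this
    have := coset_dvd HF h1HF hHFmul hHFinv X hHX
    rwa [hXdef, ← nb_sdiff, ← bd, hHFb] at this
  -- h divides n
  have hdvdn : HF.card ∣ n := by
    have huniv : HF * Finset.univ = Finset.univ := by
      apply Finset.Subset.antisymm (subset_univ _)
      intro y _
      have : (1:G) * y ∈ HF * Finset.univ := mul_mem_mul h1HF (mem_univ y)
      rwa [one_mul] at this
    have := coset_dvd HF h1HF hHFmul hHFinv Finset.univ huniv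
    rwa [card_univ] at this
  -- kappa is at least |A \ HF|
  have hkapAH : (A \ HF).card ≤ kap A := by
    rw [← hHFb, bd, nb_sdiff]
    apply card_le_card
    intro x hx
    rw [mem_sdiff] at hx ⊢
    refine ⟨?_, hx.2⟩
    have : (1:G) * x ∈ HF * A := mul_mem_mul h1HF hx.1
    rwa [one_mul] at this
  -- induction inside the subgroup
  have hsubcount : k * (A ∩ HF).card < HF.card := ihH HF h1HF hHFmul hHFinv hHFne
  -- wrap up
  have hsplit : (A ∩ HF).card + (A \ HF).card = A.card := card_inter_add_card_sdiff A HF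
  have hmulsplit : k * A.card = k * (A ∩ HF).card + k * (A \ HF).card := by
    rw [← hsplit, Nat.mul_add]
  have hm1 : k * (A \ HF).card ≤ k * kap A := Nat.mul_le_mul_left k hkapAH
  have hdvdkk : HF.card ∣ k * kap A := Dvd.dvd.mul_left hdvdkap k
  have hsub : HF.card ∣ n - k * kap A := Nat.dvd_sub hdvdn hdvdkk
  have hlow : HF.card ≤ n - k * kap A := Nat.le_of_dvd (by omega) hsub
  omega

/-! ### generation gives full balls -/

lemma pow_mem_ball_pow (T : Finset G) {x : G} {m : ℕ} (hx : x ∈ T^m) :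
    ∀ j : ℕ, x^j ∈ T^(m*j) := by
  intro j
  induction j with
  | zero => simp
  | succ j ihj =>
    have : x^j * x ∈ T^(m*j) * T^m := mul_mem_mul ihj hx
    rw [← pow_add] at this
    have he : m * j + m = m * (j+1) := by ring
    rw [he] at this
    rwa [pow_succ]

lemma gen_balls (A : Finset G) (hcl : Subgroup.closure (A : Set G) = ⊤) :
    ∀ x : G, ∃ m, x ∈ (insert 1 A : Finset G)^m := by
  intro x
  have hx : x ∈ Subgroup.closure (A : Set G) := hcl ▸ Subgroup.mem_top x
  induction hx using Subgroup.closure_induction with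
  | mem y hy =>
    exact ⟨1, by rw [pow_one]; exact mem_insert_of_mem hy⟩
  | one => exact ⟨0, by simp⟩
  | mul y z _ _ hy hz =>
    obtain ⟨m1, hm1⟩ := hy
    obtain ⟨m2, hm2⟩ := hz
    exact ⟨m1 + m2, by rw [pow_add]; exact mul_mem_mul hm1 hm2⟩
  | inv y _ hy =>
    obtain ⟨m, hm⟩ := hy
    set N := Fintype.card G with hN
    have hN1 : 1 ≤ N := Fintype.card_pos
    have hyN : y^N = 1 := pow_card_eq_one
    have hinv : y⁻¹ = y^(N-1) := by
      refine inv_eq_of_mul_eq_one_right ?_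
      rw [← pow_succ']
      have : N - 1 + 1 = N := by omega
      rw [this, hyN]
    exact ⟨m * (N-1), hinv ▸ pow_mem_ball_pow _ hm (N-1)⟩

/-! ### transfer to a subgroup -/

lemma pow_mem_coe {H : Subgroup G} (A' : Finset ↥H) (A : Finset G)
    (hsub : ∀ y ∈ A', (y : G) ∈ A) :
    ∀ (ℓ : ℕ) (x : ↥H), x ∈ A'^ℓ → (x : G) ∈ A^ℓ := by
  intro ℓ
  induction ℓ with
  | zero =>
    intro x hx
    rw [pow_zero, mem_one] at hx ⊢
    rw [hx]
    rfl
  | succ ℓ ihℓ =>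
    intro x hx
    rw [pow_succ, mem_mul] at hx ⊢
    obtain ⟨y, hy, z, hz, rfl⟩ := hx
    exact ⟨y, ihℓ y hy, z, hsub z hz, rfl⟩

end Ham

open Ham in
theorem Ham.keyP (n : ℕ) : ∀ (G : Type*) [Group G] [Fintype G] [DecidableEq G],
    Fintype.card G = n → ∀ (A : Finset G) (k : ℕ), 1 ≤ k →
    (∀ ℓ : ℕ, 1 ≤ ℓ → ℓ ≤ k → (1:G) ∉ A^ℓ) → k * A.card < n := by
  induction n using Nat.strong_induction_on with
  | _ n ih =>
  intro G _ _ _ hcard A k hk hg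
  have hnpos : 0 < n := by
    rw [← hcard]
    have : Nonempty G := ⟨1⟩
    exact Fintype.card_pos
  rcases A.eq_empty_or_nonempty with rfl | hAne
  · simpa using hnpos
  have h1A : (1:G) ∉ A := by
    have := hg 1 le_rfl hk
    rwa [pow_one] at this
  have hAcard : A.card < n := by
    have hsub : A ⊆ Finset.univ.erase 1 := fun x hx =>
      mem_erase.mpr ⟨fun hc => h1A (hc ▸ hx), mem_univ x⟩
    have := card_le_card hsub
    rw [card_erase_of_mem (mem_univ 1), card_univ, hcard] at this
    omega
  rcases eq_or_lt_of_le hk with hk1 | hk2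
  · rw [← hk1, one_mul]
    exact hAcard
  -- helper giving the subgroup induction hypothesis for any generating-set finset
  have IHH : ∀ Bset : Finset G, (∀ ℓ : ℕ, 1 ≤ ℓ → ℓ ≤ k → (1:G) ∉ Bset^ℓ) →
      ∀ HF : Finset G, (1:G) ∈ HF → (∀ a ∈ HF, ∀ b ∈ HF, a * b ∈ HF) →
      (∀ a ∈ HF, a⁻¹ ∈ HF) → HF ≠ Finset.univ → k * (Bset ∩ HF).card < HF.card := by
    intro Bset hgB HF h1 hmul hinv hne
    set Hsub : Subgroup G :=
      { carrier := ↑HF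
        one_mem' := h1
        mul_mem' := fun hx hy => hmul _ hx _ hy
        inv_mem' := fun hx => hinv _ hx } with hHsub
    have hmem : ∀ x : G, x ∈ Hsub ↔ x ∈ HF := fun x => Iff.rfl
    letI : DecidablePred (· ∈ Hsub) := fun x => decidable_of_iff (x ∈ HF) (hmem x).symm
    have hcardH : Fintype.card ↥Hsub = HF.card :=
      Fintype.card_of_subtype HF (fun x => (hmem x).symm)
    have hlt : HF.card < n := by
      rw [← hcard, ← card_univ]
      exact card_lt_card (ssubset_of_ne_of_subset hne (subset_univ HF))
    set A' : Finset ↥Hsub := (Bset ∩ HF).attach.map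
      ⟨fun x => (⟨x.1, (hmem x.1).mpr (mem_inter.mp x.2).2⟩ : ↥Hsub),
       fun x y hxy => Subtype.ext (congrArg Subtype.val hxy : (x:G) = y)⟩ with hA'
    have hcardA' : A'.card = (Bset ∩ HF).card := by rw [hA', card_map, card_attach]
    have hsubA' : ∀ y ∈ A', (y : G) ∈ Bset := by
      intro y hy
      rw [hA', mem_map] at hy
      obtain ⟨x, _, rfl⟩ := hy
      exact (mem_inter.mp x.2).1
    have hgirth' : ∀ ℓ : ℕ, 1 ≤ ℓ → ℓ ≤ k → (1 : ↥Hsub) ∉ A'^ℓ := by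
      intro ℓ hℓ1 hℓ2 hc
      have := pow_mem_coe A' Bset hsubA' ℓ 1 hc
      rw [OneMemClass.coe_one] at this
      exact hgB ℓ hℓ1 hℓ2 this
    have := ih HF.card hlt ↥Hsub hcardH A' k hk hgirth'
    rwa [hcardA'] at this
  by_cases hcl : Subgroup.closure (A : Set G) = ⊤
  · -- A generates G : run the core argument (on A or A⁻¹, whichever has smaller atoms)
    have hgen := gen_balls A hcl
    have hcl' : Subgroup.closure ((A⁻¹ : Finset G) : Set G) = ⊤ := by
      rw [Finset.coe_inv, Subgroup.closure_inv]
      exact hcl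
    have hgen' := gen_balls A⁻¹ hcl'
    have hg' : ∀ ℓ : ℕ, 1 ≤ ℓ → ℓ ≤ k → (1:G) ∉ (A⁻¹ : Finset G)^ℓ := by
      intro ℓ h1 h2 hc
      rw [inv_pow, Finset.mem_inv', inv_one] at hc
      exact hg ℓ h1 h2 hc
    rcases le_total (atomMin A) (atomMin A⁻¹) with hsym | hsym
    · have := core A k hk2 hg hAne hgen hgen' hsym (IHH A hg)
      rwa [hcard] at this
    · have hgen'' : ∀ x : G, ∃ m, x ∈ (insert 1 (A⁻¹)⁻¹ : Finset G)^m := by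
        rw [inv_inv]; exact hgen
      have hsym' : atomMin A⁻¹ ≤ atomMin (A⁻¹)⁻¹ := by rw [inv_inv]; exact hsym
      have := core A⁻¹ k hk2 hg' (hAne.inv) hgen' hgen'' hsym' (IHH A⁻¹ hg')
      rwa [hcard, Finset.card_inv] at this
  · -- A does not generate: induct into the subgroup generated by A
    set M := Subgroup.closure (A : Set G) with hM
    letI : DecidablePred (· ∈ M) := Classical.decPred _
    set MF : Finset G := Finset.univ.filter (· ∈ M) with hMF
    have hmemMF : ∀ x : G, x ∈ MF ↔ x ∈ M := by
      intro x
      rw [hMF, mem_filter]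
      simp
    have hMFne : MF ≠ Finset.univ := by
      intro hc
      apply hcl
      rw [Subgroup.eq_top_iff']
      intro x
      exact (hmemMF x).mp (hc ▸ mem_univ x)
    have hAMF : A ∩ MF = A := by
      apply inter_eq_left.mpr
      intro x hx
      exact (hmemMF x).mpr (Subgroup.subset_closure hx)
    have := IHH A hg MF ((hmemMF 1).mpr (one_mem M))
      (fun a ha b hb => (hmemMF _).mpr (mul_mem ((hmemMF a).mp ha) ((hmemMF b).mp hb)))
      (fun a ha => (hmemMF _).mpr (inv_mem ((hmemMF a).mp ha)))
      hMFne
    rw [hAMF] at this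
    calc k * A.card < MF.card := this
      _ ≤ n := by rw [← hcard, ← card_univ]; exact card_le_card (subset_univ MF)

lemma Ham.exists_list_of_mem_pow {G : Type*} [Group G] [DecidableEq G] {A : Finset G} :
    ∀ (ℓ : ℕ) (x : G), x ∈ A^ℓ →
      ∃ l : List G, l.length = ℓ ∧ (∀ y ∈ l, y ∈ A) ∧ l.prod = x := by
  intro ℓ
  induction ℓ with
  | zero =>
    intro x hx
    rw [pow_zero, Finset.mem_one] at hx
    exact ⟨[], rfl, by simp, by simp [hx]⟩
  | succ ℓ ihℓ =>
    intro x hx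
    rw [pow_succ, Finset.mem_mul] at hx
    obtain ⟨y, hy, a, ha, rfl⟩ := hx
    obtain ⟨l, hlen, hmem, hprod⟩ := ihℓ y hy
    refine ⟨l ++ [a], by simp [hlen], ?_, by simp [hprod]⟩
    intro z hz
    rw [List.mem_append, List.mem_singleton] at hz
    rcases hz with hz | rfl
    · exact hmem z hz
    · exact ha

/-- Hamidoune: if `Γ` is a finite group of order `n` and `A ⊆ Γ` with `|A| ≥ n/k`, then
the Cayley graph `Cayley(Γ,A)` contains a directed cycle of length at most `k`. -/
theorem stmt_9 {Γ : Type*} [Group Γ] [Fintype Γ] [DecidableEq Γ]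
    (A : Finset Γ) (k : ℕ) (hk : 0 < k)
    (hA : (Fintype.card Γ : ℝ) / k ≤ A.card) :
    ∃ ℓ : ℕ, 1 ≤ ℓ ∧ ℓ ≤ k ∧ IsCycle (fun v w : Γ => ∃ a ∈ A, w = v * a) ℓ := by
  -- from the numeric hypothesis, `n ≤ k * |A|`
  have hnum : Fintype.card Γ ≤ k * A.card := by
    have hkpos : (0:ℝ) < (k:ℝ) := by exact_mod_cast hk
    rw [div_le_iff₀ hkpos] at hA
    have : (Fintype.card Γ : ℝ) ≤ ((A.card * k : ℕ) : ℝ) := by push_cast; linarith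
    calc Fintype.card Γ ≤ A.card * k := Nat.cast_le.mp this
      _ = k * A.card := Nat.mul_comm _ _
  -- Hamidoune's theorem gives a short product of elements of `A` equal to 1
  obtain ⟨ℓ, hℓ1, hℓk, hmem⟩ : ∃ ℓ : ℕ, 1 ≤ ℓ ∧ ℓ ≤ k ∧ (1:Γ) ∈ A^ℓ := by
    by_contra hc
    push_neg at hc
    have := Ham.keyP (Fintype.card Γ) Γ rfl A k hk (fun ℓ h1 h2 => hc ℓ h1 h2)
    omega
  refine ⟨ℓ, hℓ1, hℓk, ?_⟩
  obtain ⟨l, hlen, hmemA, hprod⟩ := Ham.exists_list_of_mem_pow ℓ 1 hmem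
  rcases eq_or_lt_of_le hℓ1 with h1 | h2
  · -- length 1 : 1 ∈ A, loop at 1
    obtain rfl : ℓ = 1 := h1.symm
    rw [pow_one] at hmem
    exact ⟨by omega, fun _ => 1, fun i => ⟨1, hmem, by rw [mul_one]⟩⟩
  · -- length ≥ 2 : partial products around the cycle
    haveI : NeZero ℓ := ⟨by omega⟩
    haveI : Fact (1 < ℓ) := ⟨h2⟩
    refine ⟨by omega, fun i => (l.take (ZMod.val i)).prod, ?_⟩
    intro i
    have hvlt : (i : ZMod ℓ).val < ℓ := ZMod.val_lt i
    have hvlt' : (i : ZMod ℓ).val < l.length := by omega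
    refine ⟨l.get ⟨i.val, hvlt'⟩, hmemA _ (l.get_mem _), ?_⟩
    show (l.take (i + 1 : ZMod ℓ).val).prod = (l.take (i : ZMod ℓ).val).prod * l.get ⟨i.val, hvlt'⟩
    have hval : (i + 1 : ZMod ℓ).val = (i.val + 1) % ℓ := by
      rw [ZMod.val_add, ZMod.val_one]
    rcases Nat.lt_or_ge (i.val + 1) ℓ with hlt | hge
    · rw [hval, Nat.mod_eq_of_lt hlt]
      exact List.prod_take_succ l i.val hvlt'
    · have hival : i.val + 1 = ℓ := by omega
      have hz : (i + 1 : ZMod ℓ).val = 0 := by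
        rw [hval, hival, Nat.mod_self]
      rw [hz]
      simp only [List.take_zero, List.prod_nil]
      have : (l.take (i.val + 1)).prod = (l.take i.val).prod * l.get ⟨i.val, hvlt'⟩ :=
        List.prod_take_succ l i.val hvlt'
      rw [hival] at this
      have htake : l.take ℓ = l := List.take_of_length_le (by omega)
      rw [htake, hprod] at this
      exact this
end

section
/- Let G be a finite directed graph on n vertices with no loops and no digons, in which every vertex has indegree and outdegree at least n/3. If G satisfies Seymour's second neighborhood property — i.e., there exists a vertex v with |N⁺(v)| ≤ |N⁺⁺(v)| — then G contains a directed triangle. -/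
open scoped Classical in
/-- If a finite digraph on `n` vertices has no loops and no digons, every vertex has
indegree and outdegree at least `n/3`, and some vertex `v` satisfies Seymour's second
neighborhood property `|N⁺(v)| ≤ |N⁺⁺(v)|`, then the digraph contains a directed triangle. -/
theorem stmt_13 {V : Type*} [Fintype V] (E : V → V → Prop)
    (hloop : ∀ v : V, ¬ E v v)
    (hdigon : ∀ u w : V, u ≠ w → ¬ (E u w ∧ E w u))
    (hdeg : ∀ v : V, (Fintype.card V : ℝ) / 3 ≤ (Finset.univ.filter fun w => E v w).card ∧
      (Fintype.card V : ℝ) / 3 ≤ (Finset.univ.filter fun w => E w v).card)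
    (hseymour : ∃ v : V,
      (Finset.univ.filter fun w => E v w).card ≤
        (Finset.univ.filter fun w => ¬ E v w ∧ ∃ v', E v v' ∧ E v' w).card) :
    ∃ v₀ v₁ v₂ : V, v₀ ≠ v₁ ∧ v₁ ≠ v₂ ∧ v₂ ≠ v₀ ∧ E v₀ v₁ ∧ E v₁ v₂ ∧ E v₂ v₀ := by
  by_contra hN
  push_neg at hN
  obtain ⟨v, hv⟩ := hseymour
  set A := Finset.univ.filter fun w => E v w with hA
  set B := Finset.univ.filter (fun w => ¬ E v w ∧ ∃ v', E v v' ∧ E v' w) with hB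
  set C := Finset.univ.filter fun w => E w v with hC
  have hvA : v ∉ A := by simp [hA, hloop v]
  have hvB : v ∉ B := by
    simp only [hB, Finset.mem_filter, Finset.mem_univ, true_and]
    rintro ⟨-, v', h1, h2⟩
    exact hdigon v v' (fun h => hloop v (h ▸ h1)) ⟨h1, h2⟩
  have hvC : v ∉ C := by simp [hC, hloop v]
  have hAB : Disjoint A B := by
    rw [Finset.disjoint_left]
    intro w hw hw'
    simp only [hA, Finset.mem_filter, Finset.mem_univ, true_and] at hw
    simp only [hB, Finset.mem_filter, Finset.mem_univ, true_and] at hw'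
    exact hw'.1 hw
  have hAC : Disjoint A C := by
    rw [Finset.disjoint_left]
    intro w hw hw'
    simp only [hA, Finset.mem_filter, Finset.mem_univ, true_and] at hw
    simp only [hC, Finset.mem_filter, Finset.mem_univ, true_and] at hw'
    exact hdigon v w (fun h => hloop v (h ▸ hw)) ⟨hw, hw'⟩
  have hBC : Disjoint B C := by
    rw [Finset.disjoint_left]
    intro w hw hw'
    simp only [hB, Finset.mem_filter, Finset.mem_univ, true_and] at hw
    simp only [hC, Finset.mem_filter, Finset.mem_univ, true_and] at hw'
    obtain ⟨hnE, v', h1, h2⟩ := hw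
    have hvv' : v ≠ v' := fun h => hloop v (h ▸ h1)
    have hv'w : v' ≠ w := fun h => hloop v' (h ▸ h2)
    have hwv : w ≠ v := fun h => hloop v (h ▸ hw')
    exact hN v v' w hvv' hv'w hwv h1 h2 hw'
  have hvABC : v ∉ A ∪ B ∪ C := by
    simp only [Finset.mem_union]
    tauto
  have hcard : 1 + (A.card + B.card + C.card) ≤ Fintype.card V := by
    have h1 : (insert v (A ∪ B ∪ C)).card ≤ Fintype.card V := by
      simpa using Finset.card_le_card (Finset.subset_univ (insert v (A ∪ B ∪ C)))
    rw [Finset.card_insert_of_notMem hvABC,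
        Finset.card_union_of_disjoint (by
          rw [Finset.disjoint_union_left]; exact ⟨hAC, hBC⟩),
        Finset.card_union_of_disjoint hAB] at h1
    omega
  obtain ⟨hdA, hdC⟩ := hdeg v
  have hABr : (A.card : ℝ) ≤ (B.card : ℝ) := by exact_mod_cast hv
  have : (Fintype.card V : ℝ) + 1 ≤ Fintype.card V := by
    have h2 : (1 + (A.card + B.card + C.card) : ℝ) ≤ Fintype.card V := by
      exact_mod_cast hcard
    linarith
  linarith
end

section
/- Let Γ = ⟨x⟩ be the cyclic group of order d(g−1)+1 (written multiplicatively) and let A = {x, x², …, x^d}, where d ≥ 1 and g ≥ 2. Then the Cayley graph Cayley(Γ,A) is regular of degree d and has girth exactly g. -/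
open scoped Classical in
/-- If `Γ = ⟨x⟩` is cyclic of order `d(g-1)+1` and `A = {x, x², …, x^d}`, then the Cayley
graph `Cayley(Γ,A)` is regular of degree `d` with girth exactly `g`. -/
theorem stmt_16 {Γ : Type*} [Group Γ] [Fintype Γ] (x : Γ) (d g : ℕ)
    (hd : 1 ≤ d) (hg : 2 ≤ g)
    (hcard : Fintype.card Γ = d * (g - 1) + 1)
    (hgen : ∀ y : Γ, y ∈ Subgroup.zpowers x) :
    (∀ v : Γ,
      (Finset.univ.filter fun w => ∃ i : ℕ, 1 ≤ i ∧ i ≤ d ∧ w = v * x ^ i).card = d ∧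
      (Finset.univ.filter fun w => ∃ i : ℕ, 1 ≤ i ∧ i ≤ d ∧ v = w * x ^ i).card = d) ∧
    IsCycle (fun v w : Γ => ∃ i : ℕ, 1 ≤ i ∧ i ≤ d ∧ w = v * x ^ i) g ∧
    (∀ ℓ : ℕ, IsCycle (fun v w : Γ => ∃ i : ℕ, 1 ≤ i ∧ i ≤ d ∧ w = v * x ^ i) ℓ → g ≤ ℓ) := by
  set n := d * (g - 1) + 1 with hn
  have hxo : orderOf x = n := by
    rw [orderOf_eq_card_of_forall_mem_zpowers hgen, Nat.card_eq_fintype_card, hcard]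
  have hdn : d < n := by
    have h1 : d * 1 ≤ d * (g - 1) := Nat.mul_le_mul_left d (by omega)
    omega
  have hxn : x ^ n = 1 := by rw [← hxo]; exact pow_orderOf_eq_one x
  have hpinj : ∀ a b : ℕ, a < n → b < n → x ^ a = x ^ b → a = b := by
    intro a b ha hb h
    have := pow_eq_pow_iff_modEq.mp h
    rw [hxo] at this
    rwa [Nat.ModEq, Nat.mod_eq_of_lt ha, Nat.mod_eq_of_lt hb] at this
  refine ⟨?_, ?_, ?_⟩
  · intro v
    constructor
    · have heq : (Finset.univ.filter fun w => ∃ i : ℕ, 1 ≤ i ∧ i ≤ d ∧ w = v * x ^ i)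
          = (Finset.Icc 1 d).image (fun i => v * x ^ i) := by
        ext w
        simp only [Finset.mem_filter, Finset.mem_univ, true_and, Finset.mem_image,
          Finset.mem_Icc]
        constructor
        · rintro ⟨i, h1, h2, h3⟩; exact ⟨i, ⟨h1, h2⟩, h3.symm⟩
        · rintro ⟨i, ⟨h1, h2⟩, h3⟩; exact ⟨i, h1, h2, h3.symm⟩
      rw [heq, Finset.card_image_of_injOn, Nat.card_Icc]
      · omega
      · intro a ha b hb hab
        simp only [Finset.coe_Icc, Set.mem_Icc] at ha hb
        exact hpinj a b (by omega) (by omega) (mul_left_cancel hab)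
    · have heq : (Finset.univ.filter fun w => ∃ i : ℕ, 1 ≤ i ∧ i ≤ d ∧ v = w * x ^ i)
          = (Finset.Icc 1 d).image (fun i => v * (x ^ i)⁻¹) := by
        ext w
        simp only [Finset.mem_filter, Finset.mem_univ, true_and, Finset.mem_image,
          Finset.mem_Icc]
        constructor
        · rintro ⟨i, h1, h2, h3⟩
          exact ⟨i, ⟨h1, h2⟩, by rw [h3]; group⟩
        · rintro ⟨i, ⟨h1, h2⟩, h3⟩
          exact ⟨i, h1, h2, by rw [← h3]; group⟩
      rw [heq, Finset.card_image_of_injOn, Nat.card_Icc]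
      · omega
      · intro a ha b hb hab
        simp only [Finset.coe_Icc, Set.mem_Icc] at ha hb
        have : (x ^ a)⁻¹ = (x ^ b)⁻¹ := mul_left_cancel hab
        exact hpinj a b (by omega) (by omega) (inv_injective this)
  · haveI : NeZero g := ⟨by omega⟩
    haveI : Fact (1 < g) := ⟨by omega⟩
    refine ⟨by omega, fun i : ZMod g => x ^ (d * i.val), fun i => ?_⟩
    have hival : i.val < g := ZMod.val_lt i
    have hadd : (i + 1).val = (i.val + 1) % g := by
      rw [ZMod.val_add, ZMod.val_one]
    by_cases hcase : i.val = g - 1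
    · refine ⟨1, le_refl 1, hd, ?_⟩
      have h0 : (i + 1).val = 0 := by
        rw [hadd, hcase, Nat.sub_add_cancel (by omega), Nat.mod_self]
      show x ^ (d * (i + 1).val) = x ^ (d * i.val) * x ^ 1
      rw [h0, hcase, mul_zero, pow_zero, pow_one, ← pow_succ, ← hn]
      exact hxn.symm
    · refine ⟨d, hd, le_refl d, ?_⟩
      have h1 : (i + 1).val = i.val + 1 := by
        rw [hadd, Nat.mod_eq_of_lt (by omega)]
      show x ^ (d * (i + 1).val) = x ^ (d * i.val) * x ^ d
      rw [h1, Nat.mul_add, mul_one, pow_add]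
  · intro ℓ hcyc
    obtain ⟨hℓ, v, hv⟩ := hcyc
    by_contra hlt
    push_neg at hlt
    haveI : NeZero ℓ := ⟨by omega⟩
    set k : ZMod ℓ → ℕ := fun i => (hv i).choose with hk
    have hk1 : ∀ i, 1 ≤ k i := fun i => (hv i).choose_spec.1
    have hkd : ∀ i, k i ≤ d := fun i => (hv i).choose_spec.2.1
    have hkv : ∀ i, v (i + 1) = v i * x ^ (k i) := fun i => (hv i).choose_spec.2.2
    set S : ℕ → ℕ := fun m => Nat.rec 0 (fun m ih => ih + k (m : ZMod ℓ)) m with hS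
    have hSv : ∀ m : ℕ, v (m : ZMod ℓ) = v 0 * x ^ S m := by
      intro m
      induction m with
      | zero =>
          rw [Nat.cast_zero, show S 0 = 0 from rfl, pow_zero, mul_one]
      | succ m ih =>
          have : ((m + 1 : ℕ) : ZMod ℓ) = (m : ZMod ℓ) + 1 := by push_cast; ring
          rw [this, hkv, ih, pow_add, mul_assoc]
    have hSlb : ∀ m : ℕ, m ≤ S m := by
      intro m
      induction m with
      | zero => simp
      | succ m ih => have := hk1 (m : ZMod ℓ); simp only [hS] at ih ⊢; omega
    have hSub : ∀ m : ℕ, S m ≤ d * m := by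
      intro m
      induction m with
      | zero => exact Nat.le_refl 0
      | succ m ih =>
          have := hkd (m : ZMod ℓ)
          simp only [hS] at ih ⊢
          calc Nat.rec 0 (fun m ih => ih + k (m : ZMod ℓ)) m + k (m : ZMod ℓ)
              ≤ d * m + d := by omega
            _ = d * (m + 1) := by ring
    have hzero : ((ℓ : ℕ) : ZMod ℓ) = 0 := by exact_mod_cast ZMod.natCast_self ℓ
    have h1 : v 0 = v 0 * x ^ S ℓ := by rw [← hSv, hzero]
    have h2 : x ^ S ℓ = 1 := left_eq_mul.mp h1
    have hdvd : n ∣ S ℓ := by rw [← hxo]; exact orderOf_dvd_of_pow_eq_one h2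
    have hb1 : ℓ ≤ S ℓ := hSlb ℓ
    have hb2 : S ℓ ≤ d * ℓ := hSub ℓ
    have hlt2 : S ℓ < n := by
      have : d * ℓ ≤ d * (g - 1) := Nat.mul_le_mul_left d (by omega)
      omega
    have := Nat.le_of_dvd (by omega) hdvd
    omega
end

section
/- Let K_n be the complete (undirected) graph on n vertices with vertex set V and edge set E. There exist injective functions α : V → Z and γ : E → Z such that the set {α(v) + γ(e) : v ∈ V, e ∈ E, v ∈ e} has exactly n elements. -/
lemma pow3_inj : Function.Injective (fun m : ℕ => (3:ℤ)^m) := by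
  intro a b h
  simp only at h
  have : ((3^a : ℕ) : ℤ) = ((3^b : ℕ) : ℤ) := by push_cast; exact h
  exact Nat.pow_right_injective (by norm_num) (Nat.cast_injective this)

lemma not_dvd_pow3 (i : ℕ) : ¬ (3:ℤ)^(i+1) ∣ 3^i := by
  intro h
  have h' : (3:ℕ)^(i+1) ∣ 3^i := by exact_mod_cast h
  have := Nat.le_of_dvd (by positivity) h'
  have := Nat.pow_lt_pow_right (by norm_num : 1 < 3) (Nat.lt_succ_self i)
  omega

lemma sidon_ord {i j k l : ℕ} (hij : i < j) (hkl : k < l)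
    (h : (3:ℤ)^i + 3^j = 3^k + 3^l) : i = k ∧ j = l := by
  have hik : i = k := by
    rcases lt_trichotomy i k with hlt | he | hgt
    · exfalso
      apply not_dvd_pow3 i
      have h1 : (3:ℤ)^(i+1) ∣ 3^j := pow_dvd_pow 3 (by omega)
      have h2 : (3:ℤ)^(i+1) ∣ 3^k := pow_dvd_pow 3 (by omega)
      have h3 : (3:ℤ)^(i+1) ∣ 3^l := pow_dvd_pow 3 (by omega)
      have : (3:ℤ)^i = 3^k + 3^l - 3^j := by linarith
      rw [this]; exact dvd_sub (dvd_add h2 h3) h1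
    · exact he
    · exfalso
      apply not_dvd_pow3 k
      have h1 : (3:ℤ)^(k+1) ∣ 3^j := pow_dvd_pow 3 (by omega)
      have h2 : (3:ℤ)^(k+1) ∣ 3^i := pow_dvd_pow 3 (by omega)
      have h3 : (3:ℤ)^(k+1) ∣ 3^l := pow_dvd_pow 3 (by omega)
      have : (3:ℤ)^k = 3^i + 3^j - 3^l := by linarith
      rw [this]; exact dvd_sub (dvd_add h2 h1) h3
  subst hik
  have : (3:ℤ)^j = 3^l := by linarith
  exact ⟨rfl, pow3_inj this⟩

lemma sidon {i j k l : ℕ} (hij : i ≠ j) (hkl : k ≠ l)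
    (h : (3:ℤ)^i + 3^j = 3^k + 3^l) : (i = k ∧ j = l) ∨ (i = l ∧ j = k) := by
  rcases hij.lt_or_gt with h1 | h1 <;> rcases hkl.lt_or_gt with h2 | h2
  · exact Or.inl (sidon_ord h1 h2 h)
  · exact Or.inr (sidon_ord h1 h2 (by linarith))
  · exact Or.inr (by have := sidon_ord h1 h2 (by linarith); tauto)
  · exact Or.inl (by have := sidon_ord h1 h2 (by linarith); tauto)

/-- Jacob Fox: for the complete graph `K_n` there are injective labelings `α` of the
vertices and `γ` of the edges by integers such that
`{α(v) + γ(e) : v ∈ e}` has exactly `n` elements. -/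
theorem stmt_19 (n : ℕ) (hn : 2 ≤ n) :
    ∃ (α : Fin n → ℤ) (γ : {e : Sym2 (Fin n) // ¬ e.IsDiag} → ℤ),
      Function.Injective α ∧ Function.Injective γ ∧
      Set.ncard {z : ℤ | ∃ (v : Fin n) (e : {e : Sym2 (Fin n) // ¬ e.IsDiag}),
        v ∈ e.1 ∧ z = α v + γ e} = n := by
  set α : Fin n → ℤ := fun i => -(3:ℤ)^(i:ℕ) with hα
  set g : Sym2 (Fin n) → ℤ :=
    Sym2.lift ⟨fun i j => (3:ℤ)^(i:ℕ) + 3^(j:ℕ), fun i j => by ring⟩ with hg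
  refine ⟨α, fun e => g e.1, ?_, ?_, ?_⟩
  · intro a b h
    simp only [hα, neg_inj] at h
    exact Fin.val_injective (pow3_inj h)
  · rintro ⟨e1, he1⟩ ⟨e2, he2⟩ h
    induction e1 using Sym2.inductionOn with | hf i j =>
    induction e2 using Sym2.inductionOn with | hf k l =>
    simp only [Sym2.mk_isDiag_iff] at he1 he2
    simp only [hg, Sym2.lift_mk] at h
    have hij : (i:ℕ) ≠ (j:ℕ) := fun hc => he1 (Fin.val_injective hc)
    have hkl : (k:ℕ) ≠ (l:ℕ) := fun hc => he2 (Fin.val_injective hc)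
    rcases sidon hij hkl h with ⟨h1, h2⟩ | ⟨h1, h2⟩ <;>
      apply Subtype.ext <;> rw [Sym2.eq_iff]
    · exact Or.inl ⟨Fin.val_injective h1, Fin.val_injective h2⟩
    · exact Or.inr ⟨Fin.val_injective h1, Fin.val_injective h2⟩
  · have hset : {z : ℤ | ∃ (v : Fin n) (e : {e : Sym2 (Fin n) // ¬ e.IsDiag}),
        v ∈ e.1 ∧ z = α v + g e.1} = Set.range (fun w : Fin n => (3:ℤ)^(w:ℕ)) := by
      ext z
      constructor
      · rintro ⟨v, ⟨e, he⟩, hv, rfl⟩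
        set w := Sym2.Mem.other hv with hw
        have hspec : s(v, w) = e := Sym2.other_spec hv
        refine ⟨w, ?_⟩
        simp only [hα, hg, ← hspec, Sym2.lift_mk]
        ring
      · rintro ⟨w, rfl⟩
        haveI : Nontrivial (Fin n) := Fin.nontrivial_iff_two_le.mpr hn
        obtain ⟨v, hv⟩ := exists_ne w
        refine ⟨v, ⟨s(v, w), by simpa [Sym2.mk_isDiag_iff] using hv⟩,
          Sym2.mem_mk_left v w, ?_⟩
        simp only [hα, hg, Sym2.lift_mk]
        ring
    rw [hset, ← Set.image_univ, Set.ncard_image_of_injective _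
      (fun a b h => Fin.val_injective (pow3_inj h))]
    simp [Set.ncard_univ]
end
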